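/- arXiv:2112.06131 — 5 statements merged into one kernel-verified Lean document; each statement's English description precedes it below -/
import Mathlib

section
/- For Lebesgue-almost every α ∈ ℝ, the series Σ_{k=1}^{∞} 1/(k³ · ‖kα‖²) converges, where ‖t‖ denotes the distance from the real number t to the nearest integer. -/
open MeasureTheory Filter

/-- Distance from a real number to the nearest integer. -/
noncomputable def distToInt (t : ℝ) : ℝ := |t - round t|

/-!
On the circle `ℝ/ℤ`, `‖θ‖` is the distance to the nearest integer, `θ ↦ ‖θ‖ ^ (-4/5)` is
integrable, and every map `θ ↦ m • θ` with `m ≠ 0` preserves Haar measure. Hence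
`∫ ∑ₖ k ^ (-6/5) ‖k • θ‖ ^ (-4/5) dθ = ∑ₖ k ^ (-6/5) ∫ ‖θ‖ ^ (-4/5) dθ < ∞`, so for almost every
`θ` the series `∑ₖ aₖ ^ (2/5)` converges, where `aₖ = 1 / (k³ ‖k • θ‖²)`, and then so does
`∑ₖ aₖ` because `ℓ^(2/5) ⊆ ℓ^1`. Finally, a null set of the circle pulls back to a null set of `ℝ`.
-/

open Set
open scoped NNReal ENNReal

theorem summable_of_summable_norm_rpow {ι : Type*} {f : ι → ℝ} {p : ℝ} (hp₀ : 0 < p) (hp₁ : p ≤ 1)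
    (h : Summable fun i => ‖f i‖ ^ p) : Summable f := by
  have hp : (ENNReal.ofReal p).toReal = p := ENNReal.toReal_ofReal hp₀.le
  have hmem : Memℓp f (ENNReal.ofReal p) := (memℓp_gen_iff (by rwa [hp])).2 (by rwa [hp])
  have hmem₁ : Memℓp f 1 := hmem.of_exponent_ge (ENNReal.ofReal_le_one.2 hp₁)
  exact .of_norm (by simpa using (memℓp_gen_iff (by simp)).1 hmem₁)

theorem ae_summable_mul_comp_of_measurePreserving {α ι : Type*} [MeasurableSpace α] [Countable ι]
    {μ : Measure α} {F : α → ℝ≥0} (hF : Measurable F) (hF_int : ∫⁻ x, F x ∂μ ≠ ∞)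
    {T : ι → α → α} (hT : ∀ i, MeasurePreserving (T i) μ μ) {c : ι → ℝ≥0} (hc : Summable c) :
    ∀ᵐ x ∂μ, Summable fun i => c i * F (T i x) := by
  have hmeas (i : ι) : Measurable fun x => ((c i * F (T i x) : ℝ≥0) : ℝ≥0∞) :=
    (measurable_const.mul (hF.comp (hT i).measurable)).coe_nnreal_ennreal
  have hterm (i : ι) : ∫⁻ x, ((c i * F (T i x) : ℝ≥0) : ℝ≥0∞) ∂μ = c i * ∫⁻ x, F x ∂μ := by
    simp only [ENNReal.coe_mul]
    rw [lintegral_const_mul' _ _ ENNReal.coe_ne_top,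
      (hT i).lintegral_comp (f := fun x => (F x : ℝ≥0∞)) hF.coe_nnreal_ennreal]
  have hint : ∫⁻ x, ∑' i, ((c i * F (T i x) : ℝ≥0) : ℝ≥0∞) ∂μ ≠ ∞ := by
    rw [lintegral_tsum fun i => (hmeas i).aemeasurable, tsum_congr hterm, ENNReal.tsum_mul_right]
    exact ENNReal.mul_ne_top (ENNReal.tsum_coe_ne_top_iff_summable.2 hc) hF_int
  filter_upwards [ae_lt_top (Measurable.tsum hmeas) hint] with x hx
  exact ENNReal.tsum_coe_ne_top_iff_summable.1 hx.ne

namespace AddCircle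

variable {T : ℝ} [hT : Fact (0 < T)]

theorem ae_coe_of_ae {p : AddCircle T → Prop} (h : ∀ᵐ θ, p θ) : ∀ᵐ x : ℝ, p x := by
  rw [← Measure.restrict_univ (μ := volume), ← iUnion_Ioc_add_zsmul hT.out 0,
    ae_restrict_iUnion_iff]
  intro n
  rw [zero_add, zero_add, add_one_zsmul]
  exact (AddCircle.measurePreserving_mk T _).quasiMeasurePreserving.ae h

theorem lintegral_nnnorm_rpow_ne_top {r : ℝ} (hr : -1 < r) :
    ∫⁻ θ : AddCircle T, ((‖θ‖₊ ^ r : ℝ≥0) : ℝ≥0∞) ≠ ∞ := by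
  rw [← AddCircle.lintegral_preimage T (-(T / 2))]
  have hnorm : EqOn (fun x : ℝ => ((‖(x : AddCircle T)‖₊ ^ r : ℝ≥0) : ℝ≥0∞))
      (fun x => ENNReal.ofReal (‖x‖ ^ r)) (Ioc (-(T / 2)) (-(T / 2) + T)) := by
    rintro x ⟨hx₁, hx₂⟩
    have : ‖(x : AddCircle T)‖ = ‖x‖ := (norm_coe_eq_abs_iff T hT.out.ne').2 (by
      rw [abs_of_pos hT.out]; exact abs_le.2 ⟨by linarith, by linarith⟩)
    simp [← ENNReal.ofReal_coe_nnreal, NNReal.coe_rpow, this]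
  rw [setLIntegral_congr_fun measurableSet_Ioc hnorm]
  have hloc : LocallyIntegrable (fun x : ℝ => ‖x‖ ^ r) :=
    locallyIntegrable_of_norm_le_rpow (μ := volume) (C := 1) (α := -r) (by simp) (by simp; linarith)
      (ae_of_all _ fun x => by simp [abs_of_nonneg (Real.rpow_nonneg (abs_nonneg x) r)])
      (measurable_norm.pow_const r).aestronglyMeasurable
  exact ((hloc.integrableOn_isCompact isCompact_Icc).mono_set Ioc_subset_Icc_self).lintegral_lt_top.ne

/- The exponent `2/5` works because `3 · 2/5 > 1` makes `∑ k ^ (-6/5)` converge while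
`2 · 2/5 < 1` keeps `‖θ‖ ^ (-4/5)` integrable. -/
theorem ae_summable_one_div_cube_mul_norm_zsmul_sq :
    ∀ᵐ θ : AddCircle T, Summable fun k : ℕ => 1 / (((k : ℝ) + 1) ^ 3 * ‖((k : ℤ) + 1) • θ‖ ^ 2) := by
  have hc : Summable fun k : ℕ => ((k : ℝ≥0) + 1) ^ (-(6 / 5) : ℝ) := by
    simpa using (NNReal.summable_nat_add_iff 1).2
      (NNReal.summable_rpow.2 (by norm_num : -(6 / 5 : ℝ) < -1))
  have hmul (k : ℕ) : MeasurePreserving (fun θ : AddCircle T => ((k : ℤ) + 1) • θ) :=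
    Measure.measurePreserving_zsmul volume (by omega)
  filter_upwards [ae_summable_mul_comp_of_measurePreserving (measurable_nnnorm.pow_const _)
    (lintegral_nnnorm_rpow_ne_top (by norm_num : (-1 : ℝ) < -(4 / 5))) hmul hc] with θ hθ
  refine summable_of_summable_norm_rpow (p := 2 / 5) (by norm_num) (by norm_num) ?_
  refine (NNReal.summable_coe.2 hθ).congr fun k => ?_
  have hk : (0 : ℝ) < k + 1 := by positivity
  push_cast
  rw [Real.norm_of_nonneg (by positivity), one_div, ← Real.rpow_neg_one,
    ← Real.rpow_mul (by positivity), Real.mul_rpow (by positivity) (by positivity),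
    ← Real.rpow_natCast_mul hk.le, ← Real.rpow_natCast_mul (norm_nonneg _)]
  norm_num

end AddCircle

/-- For Lebesgue-almost every `α ∈ ℝ`, the series `Σ_{k ≥ 1} 1/(k³ · ‖kα‖²)` converges,
where `‖t‖` denotes the distance from `t` to the nearest integer. -/
theorem stmt2 :
    ∀ᵐ α ∂(volume : Measure ℝ),
      Summable (fun k : ℕ =>
        1 / (((k : ℝ) + 1) ^ 3 * distToInt (((k : ℝ) + 1) * α) ^ 2)) := by
  filter_upwards [AddCircle.ae_coe_of_ae (T := 1)
    AddCircle.ae_summable_one_div_cube_mul_norm_zsmul_sq] with α hα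
  convert hα using 5 with k
  rw [← AddCircle.coe_zsmul, UnitAddCircle.norm_eq, distToInt, zsmul_eq_mul]
  push_cast
  rfl
end

section
/- For every δ > 0 and for Lebesgue-almost every α ∈ (0,1), the series Σ_{k=2}^{∞} 1/( k·(log k)^{1+δ} · ‖kα‖ · |log ‖kα‖|^{1+δ} ) converges. -/
/-!
Write `w(t) = 1 / (t |log t|^{1+δ})`; the summand is `w(k) · w(‖kα‖)`. For `n ≥ 1` the set of
`α ∈ (0,1)` with `‖nα‖ ≤ ε` is covered by `n + 1` intervals of length `2ε/n`, so it has measure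
at most `4ε`. Splitting the range of `‖nα‖` into dyadic shells `(2^{-m-1}, 2^{-m}]`, on which
`w(‖nα‖) ≤ 2^{m+1} / (m log 2)^{1+δ}`, gives `∫₀¹ w(‖nα‖) dα ≤ 8 Σ_m (m log 2)^{-1-δ}`, uniformly
in `n`. By Tonelli the integral of the series over `(0,1)` is then at most this constant times
`Σ_k w(k)`, which is finite by Cauchy condensation; hence the series converges almost everywhere.
-/

open MeasureTheory Filter

open Real
open scoped ENNReal

lemma measurable_distToInt : Measurable distToInt := by
  have hround : Measurable fun t : ℝ => ((round t : ℤ) : ℝ) := by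
    simp_rw [round_eq]
    exact measurable_from_top.comp (Int.measurable_floor.comp (measurable_id.add_const _))
  exact (measurable_id.sub hround).abs

lemma distToInt_nonneg (t : ℝ) : 0 ≤ distToInt t := abs_nonneg _

lemma distToInt_le_half (t : ℝ) : distToInt t ≤ 1 / 2 := abs_sub_round t

lemma volume_setOf_distToInt_mul_le_inter_Ioo {n : ℕ} (hn : n ≠ 0) {ε : ℝ} (hε : 0 ≤ ε) :
    volume ({α : ℝ | distToInt (n * α) ≤ ε} ∩ Set.Ioo 0 1) ≤ ENNReal.ofReal (4 * ε) := by
  have hn0 : (0 : ℝ) < n := by positivity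
  have hcover : {α : ℝ | distToInt (n * α) ≤ ε} ∩ Set.Ioo 0 1 ⊆
      ⋃ j ∈ Finset.Icc (0 : ℤ) n, Metric.closedBall ((j : ℝ) / n) (ε / n) := by
    rintro α ⟨hdist, hα0, hα1⟩
    have hhalf := abs_le.mp (abs_sub_round (n * α))
    have hj0 : 0 ≤ round ((n : ℝ) * α) := by
      have : (-1 : ℝ) < round ((n : ℝ) * α) := by nlinarith
      have : (-1 : ℤ) < round ((n : ℝ) * α) := by exact_mod_cast this
      omega
    have hjn : round ((n : ℝ) * α) ≤ n := by
      have : (round ((n : ℝ) * α) : ℝ) < n + 1 := by nlinarith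
      exact Int.lt_add_one_iff.mp (by exact_mod_cast this)
    refine Set.mem_biUnion (Finset.mem_Icc.mpr ⟨hj0, hjn⟩) ?_
    have hsub : α - round ((n : ℝ) * α) / n = (n * α - round ((n : ℝ) * α)) / n := by
      field_simp
    rw [Metric.mem_closedBall, Real.dist_eq, hsub, abs_div, abs_of_pos hn0]
    exact div_le_div_of_nonneg_right hdist hn0.le
  calc volume ({α : ℝ | distToInt (n * α) ≤ ε} ∩ Set.Ioo 0 1)
      ≤ ∑ j ∈ Finset.Icc (0 : ℤ) n, volume (Metric.closedBall ((j : ℝ) / n) (ε / n)) :=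
        (measure_mono hcover).trans (measure_biUnion_finset_le _ _)
    _ = ((n + 1 : ℕ) : ℝ≥0∞) * ENNReal.ofReal (2 * (ε / n)) := by
        simp [Real.volume_closedBall]
    _ ≤ ENNReal.ofReal (4 * ε) := by
        rw [← ENNReal.ofReal_natCast, ← ENNReal.ofReal_mul (by positivity)]
        refine ENNReal.ofReal_le_ofReal ?_
        have h1 : (1 : ℝ) ≤ n := by exact_mod_cast Nat.one_le_iff_ne_zero.mpr hn
        rw [mul_div_assoc', mul_div_assoc', div_le_iff₀ hn0]
        push_cast
        nlinarith

noncomputable def bertrandWeight (p t : ℝ) : ℝ := 1 / (t * |log t| ^ p)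

section bertrandWeight

variable {p : ℝ}

lemma bertrandWeight_nonneg {t : ℝ} (ht : 0 ≤ t) : 0 ≤ bertrandWeight p t := by
  unfold bertrandWeight
  positivity

lemma measurable_bertrandWeight : Measurable (bertrandWeight p) := by
  unfold bertrandWeight
  fun_prop

lemma mul_bertrandWeight {t : ℝ} (ht : t ≠ 0) : t * bertrandWeight p t = 1 / |log t| ^ p := by
  unfold bertrandWeight
  rw [mul_one_div, div_mul_cancel_left₀ ht, one_div]

lemma bertrandWeight_mul_bertrandWeight (s t : ℝ) :
    bertrandWeight p s * bertrandWeight p t = 1 / (s * |log s| ^ p * t * |log t| ^ p) := by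
  rw [bertrandWeight, bertrandWeight, one_div_mul_one_div, mul_assoc (s * _)]

lemma bertrandWeight_le_of_one_lt_of_le (hp : 0 ≤ p) {s t : ℝ} (hs : 1 < s) (hst : s ≤ t) :
    bertrandWeight p t ≤ bertrandWeight p s := by
  have hlog : 0 < log s := log_pos hs
  refine one_div_le_one_div_of_le (by positivity) (mul_le_mul hst ?_ (by positivity) (by linarith))
  rw [abs_of_pos hlog, abs_of_pos (hlog.trans_le (log_le_log (by linarith) hst))]
  exact rpow_le_rpow hlog.le (log_le_log (by linarith) hst) hp

lemma bertrandWeight_le_two_mul (hp : 0 ≤ p) {ε t : ℝ} (hε : ε < 1) (hεt : ε / 2 < t)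
    (htε : t ≤ ε) : bertrandWeight p t ≤ 2 * bertrandWeight p ε := by
  have hε0 : 0 < ε := by linarith
  have hlog : log ε < 0 := log_neg hε0 hε
  have hlog_le : log t ≤ log ε := log_le_log (by linarith) htε
  have hlog_pow : 0 < |log ε| ^ p := rpow_pos_of_pos (abs_pos.mpr hlog.ne) p
  calc bertrandWeight p t ≤ 1 / (ε / 2 * |log ε| ^ p) := by
        refine one_div_le_one_div_of_le (by positivity) (mul_le_mul hεt.le ?_ hlog_pow.le
          (by linarith))
        rw [abs_of_neg hlog, abs_of_neg (hlog_le.trans_lt hlog)]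
        exact rpow_le_rpow (by linarith) (by linarith) hp
    _ = 2 * bertrandWeight p ε := by
        rw [bertrandWeight]
        field_simp

lemma summable_one_div_abs_log_two_pow_rpow (hp : 1 < p) :
    Summable fun k : ℕ => 1 / |log (2 ^ k)| ^ p := by
  have hlog2 : 0 < log 2 := log_pos one_lt_two
  refine ((summable_one_div_nat_rpow.mpr hp).div_const (log 2 ^ p)).congr fun k => ?_
  rw [log_pow, abs_of_nonneg (by positivity), mul_rpow (Nat.cast_nonneg k) hlog2.le, div_div]

lemma summable_bertrandWeight_natCast (hp : 1 < p) :
    Summable fun k : ℕ => bertrandWeight p k := by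
  rw [← summable_condensed_iff_of_eventually_nonneg
    (Eventually.of_forall fun k => bertrandWeight_nonneg (Nat.cast_nonneg k))
    ((eventually_ge_atTop 2).mono fun k hk => bertrandWeight_le_of_one_lt_of_le (by linarith)
      (by exact_mod_cast hk) (by push_cast; linarith))]
  refine (summable_one_div_abs_log_two_pow_rpow hp).congr fun k => ?_
  push_cast
  rw [mul_bertrandWeight (by positivity)]

lemma ofReal_bertrandWeight_le_tsum_indicator (hp : 0 ≤ p) {t : ℝ} (ht0 : 0 ≤ t)
    (ht : t ≤ 1 / 2) :
    ENNReal.ofReal (bertrandWeight p t) ≤ ∑' m : ℕ, (Set.Iic (2 ^ m)⁻¹).indicator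
      (fun _ => ENNReal.ofReal (2 * bertrandWeight p (2 ^ m)⁻¹)) t := by
  rcases ht0.eq_or_lt with rfl | ht0
  · simp [bertrandWeight] -- `bertrandWeight p 0 = 1 / 0 = 0`
  obtain ⟨m, hm_lt, hm_le⟩ :=
    exists_nat_pow_near_of_lt_one ht0 (by linarith) (by norm_num : (0 : ℝ) < 2⁻¹) (by norm_num)
  rw [inv_pow] at hm_lt hm_le
  have hm : m ≠ 0 := by
    rintro rfl
    norm_num at hm_lt
    linarith
  have hscale : ((2 : ℝ) ^ m)⁻¹ < 1 := inv_lt_one_of_one_lt₀ (one_lt_pow₀ one_lt_two hm)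
  calc ENNReal.ofReal (bertrandWeight p t) ≤ ENNReal.ofReal (2 * bertrandWeight p (2 ^ m)⁻¹) :=
        ENNReal.ofReal_le_ofReal <| bertrandWeight_le_two_mul hp hscale
          (by rwa [pow_succ, mul_inv, ← div_eq_mul_inv] at hm_lt) hm_le
    _ = (Set.Iic (2 ^ m)⁻¹).indicator
          (fun _ => ENNReal.ofReal (2 * bertrandWeight p (2 ^ m)⁻¹)) t :=
        (Set.indicator_of_mem (Set.mem_Iic.mpr hm_le) fun _ => _).symm
    _ ≤ _ := ENNReal.le_tsum m

lemma lintegral_bertrandWeight_distToInt_mul_le (hp : 0 ≤ p) {n : ℕ} (hn : n ≠ 0) :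
    ∫⁻ α in Set.Ioo 0 1, ENNReal.ofReal (bertrandWeight p (distToInt (n * α)))
      ≤ ∑' m : ℕ, ENNReal.ofReal (8 / |log (2 ^ m)| ^ p) := by
  set d : ℝ → ℝ := fun α => distToInt (n * α)
  set c : ℕ → ℝ≥0∞ := fun m => ENNReal.ofReal (2 * bertrandWeight p (2 ^ m)⁻¹)
  have hB : ∀ m : ℕ, MeasurableSet (d ⁻¹' Set.Iic (2 ^ m)⁻¹) := fun m =>
    (measurable_distToInt.comp (measurable_const_mul _)) measurableSet_Iic
  calc ∫⁻ α in Set.Ioo 0 1, ENNReal.ofReal (bertrandWeight p (d α))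
      ≤ ∫⁻ α in Set.Ioo 0 1, ∑' m : ℕ, (d ⁻¹' Set.Iic (2 ^ m)⁻¹).indicator (fun _ => c m) α :=
        lintegral_mono fun α => ofReal_bertrandWeight_le_tsum_indicator hp (distToInt_nonneg _)
          (distToInt_le_half _)
    _ = ∑' m : ℕ, c m * volume (d ⁻¹' Set.Iic (2 ^ m)⁻¹ ∩ Set.Ioo 0 1) := by
        rw [lintegral_tsum fun m => (measurable_const.indicator (hB m)).aemeasurable]
        simp_rw [lintegral_indicator_const (hB _), Measure.restrict_apply (hB _)]
    _ ≤ ∑' m : ℕ, c m * ENNReal.ofReal (4 * (2 ^ m)⁻¹) :=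
        ENNReal.tsum_le_tsum fun m => by
          gcongr
          exact volume_setOf_distToInt_mul_le_inter_Ioo hn (by positivity)
    _ = ∑' m : ℕ, ENNReal.ofReal (8 / |log (2 ^ m)| ^ p) := by
        refine tsum_congr fun m => ?_
        have hscale : (0 : ℝ) < (2 ^ m)⁻¹ := by positivity
        rw [← ENNReal.ofReal_mul
          (mul_nonneg zero_le_two (bertrandWeight_nonneg (p := p) hscale.le))]
        congr 1
        calc 2 * bertrandWeight p (2 ^ m)⁻¹ * (4 * (2 ^ m)⁻¹)
            = 8 * ((2 ^ m)⁻¹ * bertrandWeight p (2 ^ m)⁻¹) := by ring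
          _ = 8 / |log (2 ^ m)| ^ p := by
            rw [mul_bertrandWeight hscale.ne', log_inv, abs_neg, mul_one_div]

end bertrandWeight

lemma ae_summable_mul_of_lintegral_le {X : Type*} [MeasurableSpace X] {μ : Measure X}
    {a : ℕ → ℝ} {g : ℕ → X → ℝ} (ha : Summable a) (ha0 : ∀ k, 0 ≤ a k)
    (hg0 : ∀ k x, 0 ≤ g k x) (hg : ∀ k, AEMeasurable (g k) μ) {C : ℝ≥0∞} (hC : C ≠ ∞)
    (hint : ∀ k, ∫⁻ x, ENNReal.ofReal (g k x) ∂μ ≤ C) :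
    ∀ᵐ x ∂μ, Summable fun k => a k * g k x := by
  set G : ℕ → X → ℝ≥0∞ := fun k x => ENNReal.ofReal (a k * g k x)
  have hG : ∀ k, AEMeasurable (G k) μ := fun k => ((hg k).const_mul (a k)).ennreal_ofReal
  have hsum_a : ∑' k, ENNReal.ofReal (a k) ≠ ∞ := by
    rw [← ENNReal.ofReal_tsum_of_nonneg ha0 ha]
    exact ENNReal.ofReal_ne_top
  have hfinite : ∫⁻ x, ∑' k, G k x ∂μ ≠ ∞ := by
    rw [lintegral_tsum hG]
    refine ne_top_of_le_ne_top (ENNReal.mul_ne_top hsum_a hC) ?_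
    rw [← ENNReal.tsum_mul_right]
    refine ENNReal.tsum_le_tsum fun k => ?_
    simp_rw [G, ENNReal.ofReal_mul (ha0 k)]
    rw [lintegral_const_mul' _ _ ENNReal.ofReal_ne_top]
    gcongr
    exact hint k
  filter_upwards [ae_lt_top' (AEMeasurable.tsum hG) hfinite] with x hx
  exact (ENNReal.summable_toReal hx.ne).congr fun k =>
    ENNReal.toReal_ofReal (mul_nonneg (ha0 k) (hg0 k x))

/-- For every `δ > 0` and Lebesgue-almost every `α ∈ (0,1)`, the series
`Σ_{k ≥ 2} 1/( k (log k)^{1+δ} · ‖kα‖ · |log ‖kα‖|^{1+δ} )` converges. -/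
theorem stmt6 (δ : ℝ) (hδ : 0 < δ) :
    ∀ᵐ α ∂((volume : Measure ℝ).restrict (Set.Ioo 0 1)),
      Summable (fun k : ℕ =>
        1 / (((k : ℝ) + 2) * Real.log ((k : ℝ) + 2) ^ (1 + δ) *
              distToInt (((k : ℝ) + 2) * α) *
              |Real.log (distToInt (((k : ℝ) + 2) * α))| ^ (1 + δ))) := by
  have hp : 1 < 1 + δ := by linarith
  have hC : ∑' m : ℕ, ENNReal.ofReal (8 / |log (2 ^ m)| ^ (1 + δ)) ≠ ∞ := by
    rw [← ENNReal.ofReal_tsum_of_nonneg (fun m => by positivity)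
      (by simpa only [mul_one_div] using (summable_one_div_abs_log_two_pow_rpow hp).mul_left 8)]
    exact ENNReal.ofReal_ne_top
  have hae := ae_summable_mul_of_lintegral_le
    ((summable_nat_add_iff 2).mpr (summable_bertrandWeight_natCast hp))
    (fun k => bertrandWeight_nonneg (Nat.cast_nonneg _))
    (fun k α => bertrandWeight_nonneg (distToInt_nonneg _))
    (fun k => (measurable_bertrandWeight.comp
      (measurable_distToInt.comp (measurable_const_mul _))).aemeasurable) hC
    (fun k => lintegral_bertrandWeight_distToInt_mul_le (n := k + 2) (by linarith) (by omega))
  filter_upwards [hae] with α hα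
  refine hα.congr fun k => ?_
  push_cast
  rw [bertrandWeight_mul_bertrandWeight, abs_of_nonneg (log_nonneg (by linarith))]
end

section
/- Let K > 0 and let (c_k) and (d_k), indexed by k ∈ ℤ² with k₁k₂ ≠ 0, be real numbers with |c_k − d_k| ≤ K|k|^{−5/2}. For ε ∈ (0,1) fixed and N a positive integer, let Ŝ(N,α) = { k ∈ ℤ² : for i = 1,2, ε³N < |k_i| < N/ε and |k_i|^{3/4}·|{k_iα_i}| < ε^{−2}·N^{−1/4} }, and let ψ_k(x,α;N) = cos( 2π⟨k,x⟩ + π(N−1)({k₁α₁}+{k₂α₂}) ) · sin(πN{k₁α₁}) sin(πN{k₂α₂}) / ( N^{1/2} sin(π{k₁α₁}) sin(π{k₂α₂}) ). Then there is a constant C = C(K,ε) such that for all N, ‖ Σ_{k ∈ Ŝ(N,α)} (c_k − d_k)·ψ_k ‖²_{L²(𝕋² × (𝕋² ∖ E_N(ε)))} ≤ C·N^{−1}; in particular the sums with coefficients c_k and with coefficients d_k over Ŝ(N,α) differ by o(1) in L² as N → ∞. -/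
open MeasureTheory Filter

/-- The representative of `t` modulo `1` lying in `(-1/2, 1/2]` (denoted `{t}` in the paper). -/
noncomputable def sfrac (t : ℝ) : ℝ := t - ⌈t - 1/2⌉

/-- A fundamental domain for `𝕋² = ℝ²/ℤ²`. -/
def unitCell : Set (ℝ × ℝ) := Set.Ioc 0 1 ×ˢ Set.Ioc 0 1

/-- Euclidean norm `|k|` of `k ∈ ℤ²`. -/
noncomputable def knorm (k : ℤ × ℤ) : ℝ := Real.sqrt ((k.1 : ℝ) ^ 2 + (k.2 : ℝ) ^ 2)

/-- The coefficient-free oscillating factor `ψ_k(x,α;N)`. -/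
noncomputable def psiterm (N : ℕ) (x α : ℝ × ℝ) (k : ℤ × ℤ) : ℝ :=
  Real.cos (2 * Real.pi * ((k.1 : ℝ) * x.1 + (k.2 : ℝ) * x.2)
      + Real.pi * ((N : ℝ) - 1) * (sfrac ((k.1 : ℝ) * α.1) + sfrac ((k.2 : ℝ) * α.2))) *
    (Real.sin (Real.pi * (N : ℝ) * sfrac ((k.1 : ℝ) * α.1)) *
      Real.sin (Real.pi * (N : ℝ) * sfrac ((k.2 : ℝ) * α.2))) /
    ((N : ℝ) ^ ((1 : ℝ)/2) * Real.sin (Real.pi * sfrac ((k.1 : ℝ) * α.1)) *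
      Real.sin (Real.pi * sfrac ((k.2 : ℝ) * α.2)))

/-- The exceptional set `E_N(ε)` of `α ∈ 𝕋²` (realized in `ℝ²`). -/
def badSet (ε : ℝ) (N : ℕ) : Set (ℝ × ℝ) :=
  {α | ∃ n : ℕ, 1 ≤ n ∧ (n : ℝ) ≤ (N : ℝ) / ε ∧
      ((n : ℝ) ^ ((3 : ℝ)/4) * distToInt ((n : ℝ) * α.1)
          < ε ^ ((1 : ℝ)/2) * (N : ℝ) ^ (-(1 : ℝ)/4) ∨
        (n : ℝ) ^ ((3 : ℝ)/4) * distToInt ((n : ℝ) * α.2)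
          < ε ^ ((1 : ℝ)/2) * (N : ℝ) ^ (-(1 : ℝ)/4))}

/-- The Haar measure on `𝕋² × (𝕋² ∖ E_N(ε))`, realized on fundamental domains. -/
noncomputable def μE (ε : ℝ) (N : ℕ) : Measure ((ℝ × ℝ) × (ℝ × ℝ)) :=
  (volume.restrict unitCell).prod (volume.restrict (unitCell \ badSet ε N))

/-- The resonant set `Ŝ(N,α)`. -/
def Shat (ε : ℝ) (N : ℕ) (α : ℝ × ℝ) : Set (ℤ × ℤ) :=
  {k | ε ^ 3 * (N : ℝ) < (|k.1| : ℝ) ∧ ε ^ 3 * (N : ℝ) < (|k.2| : ℝ) ∧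
    (|k.1| : ℝ) < (N : ℝ) / ε ∧ (|k.2| : ℝ) < (N : ℝ) / ε ∧
    (|k.1| : ℝ) ^ ((3 : ℝ)/4) * |sfrac ((k.1 : ℝ) * α.1)|
      < ε ^ (-(2 : ℝ)) * (N : ℝ) ^ (-(1 : ℝ)/4) ∧
    (|k.2| : ℝ) ^ ((3 : ℝ)/4) * |sfrac ((k.2 : ℝ) * α.2)|
      < ε ^ (-(2 : ℝ)) * (N : ℝ) ^ (-(1 : ℝ)/4)}

/-!
Write the `k`-th summand as `q_k(α) · cos (2π⟨k,x⟩ + φ_k(α))`. For `α ∉ E_N(ε)` and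
`k ∈ Ŝ(N,α)` the Diophantine condition, applied with `n = |k_i| ≤ N/ε`, gives
`|sin π{k_iα_i}| ≥ 2 ε^{1/2} N^{-1/4} |k_i|^{-3/4}`, so the amplitude of `ψ_k` is at most
`|k₁k₂|^{3/4} / (4ε) ≤ |k|^{3/2} / (4ε)`; against `|c_k - d_k| ≤ K|k|^{-5/2}` and `|k| > ε³N`
this gives `|q_k| ≤ K / (4ε⁴N)`. Orthogonality of the characters bounds the `x`-integral of the
square by `2 Σ_k q_k²`. On the other hand `k ∈ Ŝ(N,α)` forces `|{k_iα_i}| < 1/(ε⁵N)`, which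
confines `α` to a set of measure at most `(6/(ε⁵N))²`. Summing over the `O(N²/ε²)` frequencies
with `|k_i| ≤ N/ε` gives `O(N⁻²)`.
-/

/-! ### Distance to the nearest integer -/

lemma abs_sfrac_le_half (t : ℝ) : |sfrac t| ≤ 1 / 2 := by
  have h₁ : t - 1 / 2 ≤ ⌈t - 1 / 2⌉ := Int.le_ceil _
  have h₂ : (⌈t - 1 / 2⌉ : ℝ) < t - 1 / 2 + 1 := Int.ceil_lt_add_one _
  rw [abs_le, sfrac]
  constructor <;> linarith

lemma abs_sfrac_eq_distToInt (t : ℝ) : |sfrac t| = distToInt t := by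
  have h := abs_sfrac_le_half t
  rw [sfrac] at h ⊢
  refine le_antisymm ?_ (round_le t _)
  rcases eq_or_ne ⌈t - 1 / 2⌉ (round t) with he | hne
  · rw [he]; rfl
  -- two distinct integers within `1/2` of `t` are both at distance exactly `1/2`
  · have h₁ : (1 : ℝ) ≤ |(⌈t - 1 / 2⌉ : ℝ) - round t| := by
      exact_mod_cast Int.one_le_abs (sub_ne_zero.mpr hne)
    have h₂ := abs_sub_le (⌈t - 1 / 2⌉ : ℝ) t (round t)
    rw [abs_sub_comm _ t] at h₂
    have := abs_sub_round t
    unfold distToInt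
    linarith

lemma distToInt_neg_le (t : ℝ) : distToInt (-t) ≤ distToInt t :=
  calc distToInt (-t) ≤ |-t - ((-round t : ℤ) : ℝ)| := round_le _ _
    _ = distToInt t := by rw [distToInt, ← abs_neg]; push_cast; ring_nf

lemma distToInt_neg (t : ℝ) : distToInt (-t) = distToInt t :=
  le_antisymm (distToInt_neg_le t) (by simpa using distToInt_neg_le (-t))

lemma distToInt_natAbs_mul (j : ℤ) (a : ℝ) : distToInt (j.natAbs * a) = |sfrac (j * a)| := by
  rw [abs_sfrac_eq_distToInt, Nat.cast_natAbs]
  rcases abs_choice (j : ℝ) with h | h <;> simp only [Int.cast_abs, h, neg_mul, distToInt_neg]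

lemma two_mul_abs_le_abs_sin_pi_mul {t : ℝ} (ht : |t| ≤ 1 / 2) :
    2 * |t| ≤ |Real.sin (Real.pi * t)| := by
  have h := Real.mul_abs_le_abs_sin (x := Real.pi * t) (by
    rw [abs_mul, abs_of_pos Real.pi_pos]; nlinarith [Real.pi_pos])
  rwa [abs_mul, abs_of_pos Real.pi_pos, ← mul_assoc, div_mul_cancel₀ _ Real.pi_ne_zero] at h

@[fun_prop]
lemma measurable_sfrac : Measurable sfrac :=
  measurable_id.sub (measurable_from_top.comp (Int.measurable_ceil.comp (measurable_id.sub_const _)))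

lemma measurableSet_badSet (ε : ℝ) (N : ℕ) : MeasurableSet (badSet ε N) := by
  simp only [badSet, ← abs_sfrac_eq_distToInt]
  exact measurableSet_setOfPred.mpr (by fun_prop)

/-! ### Orthogonality of the characters of the torus -/

noncomputable def fourierArg (k : ℤ × ℤ) (x : ℝ × ℝ) : ℝ :=
  2 * Real.pi * ((k.1 : ℝ) * x.1 + (k.2 : ℝ) * x.2)

@[fun_prop]
lemma continuous_fourierArg (k : ℤ × ℤ) : Continuous (fourierArg k) := by
  unfold fourierArg; fun_prop

lemma fourierArg_add (k k' : ℤ × ℤ) (x : ℝ × ℝ) :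
    fourierArg (k + k') x = fourierArg k x + fourierArg k' x := by
  simp only [fourierArg, Prod.fst_add, Prod.snd_add, Int.cast_add]; ring

lemma fourierArg_sub (k k' : ℤ × ℤ) (x : ℝ × ℝ) :
    fourierArg (k - k') x = fourierArg k x - fourierArg k' x := by
  simp only [fourierArg, Prod.fst_sub, Prod.snd_sub, Int.cast_sub]; ring

lemma measurableSet_unitCell : MeasurableSet unitCell :=
  measurableSet_Ioc.prod measurableSet_Ioc

lemma volume_unitCell : volume unitCell = 1 := by
  simp [unitCell, Measure.volume_eq_prod, Measure.prod_prod, Real.volume_Ioc]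

lemma restrict_unitCell_eq_prod :
    (volume : Measure (ℝ × ℝ)).restrict unitCell =
      (volume.restrict (Set.Ioc (0 : ℝ) 1)).prod (volume.restrict (Set.Ioc (0 : ℝ) 1)) := by
  rw [unitCell, Measure.volume_eq_prod, Measure.prod_restrict]

instance : IsFiniteMeasure (volume.restrict unitCell) :=
  ⟨by simp [volume_unitCell]⟩

instance (s : Set (ℝ × ℝ)) : IsFiniteMeasure (volume.restrict (unitCell \ s)) :=
  ⟨by simpa using (measure_mono Set.sdiff_subset).trans_lt (by simp [volume_unitCell])⟩

lemma integral_Ioc_cos_two_pi_int_mul_add {m : ℤ} (hm : m ≠ 0) (c : ℝ) :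
    ∫ t in Set.Ioc (0 : ℝ) 1, Real.cos (2 * Real.pi * m * t + c) = 0 := by
  have hω : 2 * Real.pi * m ≠ 0 := by simp [Real.pi_ne_zero, hm]
  rw [← intervalIntegral.integral_of_le zero_le_one,
    intervalIntegral.integral_comp_mul_add (fun t => Real.cos t) hω c, integral_cos, mul_one,
    mul_zero, zero_add, add_comm, mul_comm, Real.sin_add_int_mul_two_pi, sub_self, smul_zero]

lemma integral_unitCell_cos_fourierArg_add {m : ℤ × ℤ} (hm : m ≠ 0) (c : ℝ) :
    ∫ x in unitCell, Real.cos (fourierArg m x + c) = 0 := by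
  rw [restrict_unitCell_eq_prod]
  have hint : Integrable (fun x => Real.cos (fourierArg m x + c))
      ((volume.restrict (Set.Ioc (0 : ℝ) 1)).prod (volume.restrict (Set.Ioc (0 : ℝ) 1))) :=
    .of_bound (by fun_prop) 1 (.of_forall fun _ => Real.abs_cos_le_one _)
  -- integrate first in a coordinate where `m` does not vanish
  by_cases h₂ : m.2 = 0
  · have h₁ : m.1 ≠ 0 := fun h₁ => hm (Prod.ext h₁ h₂)
    rw [integral_prod_symm _ hint]
    refine integral_eq_zero_of_ae (.of_forall fun x₂ => ?_)
    simpa [fourierArg, mul_add, add_assoc, mul_assoc] using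
      integral_Ioc_cos_two_pi_int_mul_add h₁ (2 * Real.pi * (m.2 * x₂) + c)
  · rw [integral_prod _ hint]
    refine integral_eq_zero_of_ae (.of_forall fun x₁ => ?_)
    simpa [fourierArg, mul_add, add_assoc, add_left_comm, mul_assoc] using
      integral_Ioc_cos_two_pi_int_mul_add h₂ (2 * Real.pi * (m.1 * x₁) + c)

lemma abs_integral_unitCell_cos_mul_cos_le (k k' : ℤ × ℤ) (a b : ℝ) :
    |∫ x in unitCell, Real.cos (fourierArg k x + a) * Real.cos (fourierArg k' x + b)|
      ≤ (if k' = k then 1 else 0) + (if k' = -k then 1 else 0) := by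
  by_cases h : k' = k ∨ k' = -k
  · rw [← Real.norm_eq_abs]
    calc _ ≤ 1 * volume.real unitCell :=
          norm_setIntegral_le_of_norm_le_const (by simp [volume_unitCell]) fun x _ => by
            simpa only [norm_mul, Real.norm_eq_abs] using
              mul_le_one₀ (Real.abs_cos_le_one _) (abs_nonneg _) (Real.abs_cos_le_one _)
      _ = 1 := by simp [Measure.real, volume_unitCell]
      _ ≤ _ := by rcases h with rfl | rfl <;> simp <;> split_ifs <;> norm_num
  · rw [not_or] at h
    have hadd : k + k' ≠ 0 := fun h₀ => h.2 (eq_neg_of_add_eq_zero_right h₀)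
    have hsub : k - k' ≠ 0 := sub_ne_zero.mpr (Ne.symm h.1)
    have hprod : ∀ x, Real.cos (fourierArg k x + a) * Real.cos (fourierArg k' x + b)
        = Real.cos (fourierArg (k + k') x + (a + b)) / 2
          + Real.cos (fourierArg (k - k') x + (a - b)) / 2 := fun x => by
      have h2 := Real.two_mul_cos_mul_cos (fourierArg k x + a) (fourierArg k' x + b)
      rw [show fourierArg k x + a - (fourierArg k' x + b)
          = fourierArg (k - k') x + (a - b) by rw [fourierArg_sub]; ring,
        show fourierArg k x + a + (fourierArg k' x + b)
          = fourierArg (k + k') x + (a + b) by rw [fourierArg_add]; ring] at h2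
      linarith
    have hint : ∀ (m : ℤ × ℤ) (c : ℝ),
        Integrable (fun x => Real.cos (fourierArg m x + c) / 2) (volume.restrict unitCell) :=
      fun m c => .of_bound (by fun_prop) 1 (.of_forall fun x => by
        rw [Real.norm_eq_abs, abs_div, abs_two]
        linarith [Real.abs_cos_le_one (fourierArg m x + c)])
    simp_rw [hprod]
    rw [integral_add (hint _ _) (hint _ _), integral_div, integral_div,
      integral_unitCell_cos_fourierArg_add hadd, integral_unitCell_cos_fourierArg_add hsub]
    simp [h.1, h.2]

lemma sum_sq_add_abs_mul_abs_neg_le {T : Finset (ℤ × ℤ)} (hT : ∀ k ∈ T, -k ∈ T)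
    (q : ℤ × ℤ → ℝ) : ∑ k ∈ T, (q k ^ 2 + |q k| * |q (-k)|) ≤ 2 * ∑ k ∈ T, q k ^ 2 := by
  have hneg : ∑ k ∈ T, q (-k) ^ 2 = ∑ k ∈ T, q k ^ 2 :=
    Finset.sum_nbij' (fun k => -k) (fun k => -k) hT hT (by simp) (by simp) (fun _ _ => rfl)
  calc ∑ k ∈ T, (q k ^ 2 + |q k| * |q (-k)|)
      ≤ ∑ k ∈ T, (q k ^ 2 + (q k ^ 2 + q (-k) ^ 2) / 2) := by
        gcongr with k
        nlinarith [sq_nonneg (|q k| - |q (-k)|), sq_abs (q k), sq_abs (q (-k))]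
    _ = 2 * ∑ k ∈ T, q k ^ 2 := by
        rw [Finset.sum_add_distrib, ← Finset.sum_div, Finset.sum_add_distrib, hneg]
        ring

lemma integral_unitCell_sq_sum_cos_le {T : Finset (ℤ × ℤ)} (hT : ∀ k ∈ T, -k ∈ T)
    (q φ : ℤ × ℤ → ℝ) :
    ∫ x in unitCell, (∑ k ∈ T, q k * Real.cos (fourierArg k x + φ k)) ^ 2
      ≤ 2 * ∑ k ∈ T, q k ^ 2 := by
  set J : ℤ × ℤ → ℤ × ℤ → ℝ := fun k k' =>
    ∫ x in unitCell, Real.cos (fourierArg k x + φ k) * Real.cos (fourierArg k' x + φ k')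
    with hJ
  have hint : ∀ k k', Integrable (fun x => q k * q k' *
      (Real.cos (fourierArg k x + φ k) * Real.cos (fourierArg k' x + φ k')))
      (volume.restrict unitCell) := fun k k' =>
    .of_bound (by fun_prop) |q k * q k'| (.of_forall fun x => by
      rw [Real.norm_eq_abs, abs_mul (q k * q k'), abs_mul (Real.cos _)]
      exact mul_le_of_le_one_right (abs_nonneg _)
        (mul_le_one₀ (Real.abs_cos_le_one _) (abs_nonneg _) (Real.abs_cos_le_one _)))
  calc ∫ x in unitCell, (∑ k ∈ T, q k * Real.cos (fourierArg k x + φ k)) ^ 2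
      = ∫ x in unitCell, ∑ k ∈ T, ∑ k' ∈ T, q k * q k' *
          (Real.cos (fourierArg k x + φ k) * Real.cos (fourierArg k' x + φ k')) := by
        refine integral_congr_ae (.of_forall fun x => ?_)
        simp only [sq, Finset.sum_mul_sum]
        exact Finset.sum_congr rfl fun _ _ => Finset.sum_congr rfl fun _ _ => by ring
    _ = ∑ k ∈ T, ∑ k' ∈ T, q k * q k' * J k k' := by
        rw [integral_finsetSum _ fun k _ => integrable_finsetSum _ fun k' _ => hint k k']
        refine Finset.sum_congr rfl fun k _ => ?_
        rw [integral_finsetSum _ fun k' _ => hint k k']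
        simp only [hJ, integral_const_mul]
    _ ≤ ∑ k ∈ T, ∑ k' ∈ T,
          |q k| * |q k'| * ((if k' = k then 1 else 0) + (if k' = -k then 1 else 0)) := by
        refine Finset.sum_le_sum fun k _ => Finset.sum_le_sum fun k' _ => ?_
        calc q k * q k' * J k k' ≤ |q k * q k' * J k k'| := le_abs_self _
          _ = |q k| * |q k'| * |J k k'| := by rw [abs_mul, abs_mul]
          _ ≤ _ := by gcongr; exact abs_integral_unitCell_cos_mul_cos_le k k' _ _
    _ = ∑ k ∈ T, (q k ^ 2 + |q k| * |q (-k)|) := by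
        refine Finset.sum_congr rfl fun k hk => ?_
        simp only [mul_add, mul_ite, mul_one, mul_zero, Finset.sum_add_distrib,
          Finset.sum_ite_eq', hk, hT k hk, if_true, abs_mul_abs_self, sq]
    _ ≤ 2 * ∑ k ∈ T, q k ^ 2 := sum_sq_add_abs_mul_abs_neg_le hT q

lemma integral_prod_sq_sum_cos_le {ν : Measure (ℝ × ℝ)} [IsFiniteMeasure ν]
    {T : Finset (ℤ × ℤ)} (hT : ∀ k ∈ T, -k ∈ T) {q φ : ℝ × ℝ → ℤ × ℤ → ℝ}
    (hq : ∀ k, Measurable fun α => q α k) (hφ : ∀ k, Measurable fun α => φ α k) {B : ℝ}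
    (hB : ∀ k, ∀ᵐ α ∂ν, |q α k| ≤ B) :
    ∫ p, (∑ k ∈ T, q p.2 k * Real.cos (fourierArg k p.1 + φ p.2 k)) ^ 2
        ∂(volume.restrict unitCell).prod ν
      ≤ 2 * ∑ k ∈ T, ∫ α, q α k ^ 2 ∂ν := by
  have hB' : ∀ᵐ α ∂ν, ∀ k ∈ T, |q α k| ≤ B := (ae_ball_iff T.countable_toSet).mpr fun k _ => hB k
  have hsq : ∀ k, Integrable (fun α => q α k ^ 2) ν := fun k =>
    .of_bound ((hq k).pow_const 2).aestronglyMeasurable (B ^ 2) <| (hB k).mono fun α hα => by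
      rw [Real.norm_eq_abs, abs_pow]
      exact pow_le_pow_left₀ (abs_nonneg _) hα 2
  have hF : Integrable (fun p : (ℝ × ℝ) × (ℝ × ℝ) =>
      (∑ k ∈ T, q p.2 k * Real.cos (fourierArg k p.1 + φ p.2 k)) ^ 2)
      ((volume.restrict unitCell).prod ν) := by
    refine .of_bound (Measurable.aestronglyMeasurable (by fun_prop)) ((T.card * B) ^ 2) ?_
    refine (Measure.quasiMeasurePreserving_snd.ae hB').mono fun p hp => ?_
    rw [Real.norm_eq_abs, abs_pow]
    refine pow_le_pow_left₀ (abs_nonneg _) ?_ 2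
    calc |∑ k ∈ T, q p.2 k * Real.cos (fourierArg k p.1 + φ p.2 k)|
        ≤ ∑ k ∈ T, |q p.2 k * Real.cos (fourierArg k p.1 + φ p.2 k)| :=
          Finset.abs_sum_le_sum_abs _ _
      _ ≤ ∑ _k ∈ T, B := Finset.sum_le_sum fun k hk => by
          rw [abs_mul]
          exact (mul_le_mul (hp k hk) (Real.abs_cos_le_one _) (abs_nonneg _)
            ((abs_nonneg _).trans (hp k hk))).trans_eq (mul_one B)
      _ = T.card * B := by rw [Finset.sum_const, nsmul_eq_mul]
  calc _ = ∫ α, (∫ x in unitCell,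
        (∑ k ∈ T, q α k * Real.cos (fourierArg k x + φ α k)) ^ 2) ∂ν := by
        rw [integral_prod_symm _ hF]
    _ ≤ ∫ α, 2 * ∑ k ∈ T, q α k ^ 2 ∂ν := by
        refine integral_mono ?_ ((integrable_finsetSum _ fun k _ => hsq k).const_mul 2)
          fun α => integral_unitCell_sq_sum_cos_le hT (q α) (φ α)
        exact hF.integral_prod_right
    _ = 2 * ∑ k ∈ T, ∫ α, q α k ^ 2 ∂ν := by
        rw [integral_const_mul, integral_finsetSum _ fun k _ => hsq k]

/-! ### The summands as trigonometric polynomials in `x` -/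

noncomputable def psiPhase (N : ℕ) (α : ℝ × ℝ) (k : ℤ × ℤ) : ℝ :=
  Real.pi * ((N : ℝ) - 1) * (sfrac ((k.1 : ℝ) * α.1) + sfrac ((k.2 : ℝ) * α.2))

noncomputable def psiAmplitude (N : ℕ) (α : ℝ × ℝ) (k : ℤ × ℤ) : ℝ :=
  (Real.sin (Real.pi * (N : ℝ) * sfrac ((k.1 : ℝ) * α.1)) *
      Real.sin (Real.pi * (N : ℝ) * sfrac ((k.2 : ℝ) * α.2))) /
    ((N : ℝ) ^ ((1 : ℝ)/2) * Real.sin (Real.pi * sfrac ((k.1 : ℝ) * α.1)) *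
      Real.sin (Real.pi * sfrac ((k.2 : ℝ) * α.2)))

lemma psiterm_eq (N : ℕ) (x α : ℝ × ℝ) (k : ℤ × ℤ) :
    psiterm N x α k = psiAmplitude N α k * Real.cos (fourierArg k x + psiPhase N α k) := by
  rw [psiterm, psiAmplitude, psiPhase, fourierArg, mul_div_assoc, mul_comm]

noncomputable def resonantCoeff (ε : ℝ) (N : ℕ) (c d : ℤ × ℤ → ℝ) (α : ℝ × ℝ) (k : ℤ × ℤ) : ℝ :=
  (Shat ε N α).indicator (fun k' => (c k' - d k') * psiAmplitude N α k') k

lemma indicator_psiterm_eq (ε : ℝ) (N : ℕ) (c d : ℤ × ℤ → ℝ) (x α : ℝ × ℝ) (k : ℤ × ℤ) :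
    (Shat ε N α).indicator (fun k' => (c k' - d k') * psiterm N x α k') k
      = resonantCoeff ε N c d α k * Real.cos (fourierArg k x + psiPhase N α k) := by
  by_cases hk : k ∈ Shat ε N α
  · simp only [resonantCoeff, Set.indicator_of_mem hk, psiterm_eq, mul_assoc]
  · simp only [resonantCoeff, Set.indicator_of_notMem hk, zero_mul]

lemma measurableSet_setOf_mem_Shat (ε : ℝ) (N : ℕ) (k : ℤ × ℤ) :
    MeasurableSet {α : ℝ × ℝ | k ∈ Shat ε N α} :=
  measurableSet_setOfPred.mpr (by unfold Shat; fun_prop)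

lemma measurable_psiPhase (N : ℕ) (k : ℤ × ℤ) : Measurable fun α => psiPhase N α k := by
  unfold psiPhase; fun_prop

lemma measurable_resonantCoeff (ε : ℝ) (N : ℕ) (c d : ℤ × ℤ → ℝ) (k : ℤ × ℤ) :
    Measurable fun α => resonantCoeff ε N c d α k := by
  simp only [resonantCoeff, Set.indicator]
  exact Measurable.ite (measurableSet_setOf_mem_Shat ε N k) (by unfold psiAmplitude; fun_prop)
    measurable_const

noncomputable def intBox (M : ℕ) : Finset (ℤ × ℤ) :=
  Finset.Icc (-(M : ℤ)) M ×ˢ Finset.Icc (-(M : ℤ)) M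

lemma neg_mem_intBox {M : ℕ} {k : ℤ × ℤ} (hk : k ∈ intBox M) : -k ∈ intBox M := by
  simp only [intBox, Finset.mem_product, Finset.mem_Icc, Prod.fst_neg, Prod.snd_neg] at hk ⊢
  omega

lemma card_intBox (M : ℕ) : (intBox M).card = (2 * M + 1) ^ 2 := by
  rw [intBox, Finset.card_product, Int.card_Icc, sq]
  congr 1 <;> omega

lemma mem_intBox_of_mem_Shat {ε : ℝ} {N : ℕ} {α : ℝ × ℝ} {k : ℤ × ℤ} (hk : k ∈ Shat ε N α) :
    k ∈ intBox ⌈(N : ℝ) / ε⌉₊ := by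
  obtain ⟨-, -, h₁, h₂, -⟩ := hk
  have hM := Nat.le_ceil ((N : ℝ) / ε)
  have i₁ : |k.1| ≤ (⌈(N : ℝ) / ε⌉₊ : ℤ) := by exact_mod_cast (h₁.le.trans hM)
  have i₂ : |k.2| ≤ (⌈(N : ℝ) / ε⌉₊ : ℤ) := by exact_mod_cast (h₂.le.trans hM)
  simp only [intBox, Finset.mem_product, Finset.mem_Icc]
  exact ⟨abs_le.mp i₁, abs_le.mp i₂⟩

lemma tsum_indicator_psiterm_eq (ε : ℝ) (N : ℕ) (c d : ℤ × ℤ → ℝ) (x α : ℝ × ℝ) :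
    ∑' k, (Shat ε N α).indicator (fun k' => (c k' - d k') * psiterm N x α k') k
      = ∑ k ∈ intBox ⌈(N : ℝ) / ε⌉₊,
          resonantCoeff ε N c d α k * Real.cos (fourierArg k x + psiPhase N α k) := by
  rw [tsum_eq_sum fun k hk => Set.indicator_of_notMem (fun h => hk (mem_intBox_of_mem_Shat h)) _]
  exact Finset.sum_congr rfl fun k _ => indicator_psiterm_eq ε N c d x α k

/-! ### Size of the coefficients off the exceptional set -/

lemma abs_le_knorm_fst (k : ℤ × ℤ) : |(k.1 : ℝ)| ≤ knorm k :=
  Real.abs_le_sqrt (le_add_of_nonneg_right (sq_nonneg _))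

lemma abs_le_knorm_snd (k : ℤ × ℤ) : |(k.2 : ℝ)| ≤ knorm k :=
  Real.abs_le_sqrt (le_add_of_nonneg_left (sq_nonneg _))

lemma knorm_rpow_mul_le_inv {k : ℤ × ℤ} (hk : k.1 ≠ 0) :
    knorm k ^ (-(5 : ℝ)/2) * (|(k.1 : ℝ)| ^ ((3 : ℝ)/4) * |(k.2 : ℝ)| ^ ((3 : ℝ)/4))
      ≤ (knorm k)⁻¹ := by
  have hpos : 0 < knorm k := (abs_pos.mpr (Int.cast_ne_zero.mpr hk)).trans_le (abs_le_knorm_fst k)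
  calc knorm k ^ (-(5 : ℝ)/2) * (|(k.1 : ℝ)| ^ ((3 : ℝ)/4) * |(k.2 : ℝ)| ^ ((3 : ℝ)/4))
      ≤ knorm k ^ (-(5 : ℝ)/2) * (knorm k ^ ((3 : ℝ)/4) * knorm k ^ ((3 : ℝ)/4)) := by
        gcongr
        exacts [abs_le_knorm_fst k, abs_le_knorm_snd k]
    _ = (knorm k)⁻¹ := by
        rw [← Real.rpow_add hpos, ← Real.rpow_add hpos, ← Real.rpow_neg_one]
        norm_num

lemma nonneg_of_forall_abs_sub_le_mul_knorm_rpow {K : ℝ} {c d : ℤ × ℤ → ℝ}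
    (hcd : ∀ k : ℤ × ℤ, k.1 * k.2 ≠ 0 → |c k - d k| ≤ K * knorm k ^ (-(5 : ℝ)/2)) : 0 ≤ K :=
  nonneg_of_mul_nonneg_left ((abs_nonneg _).trans (hcd (1, 1) one_ne_zero))
    (Real.rpow_pos_of_pos (Real.sqrt_pos.mpr (by norm_num)) _)

section Resonance

variable {K ε : ℝ} {N : ℕ} {c d : ℤ × ℤ → ℝ}

lemma ne_zero_of_mem_Shat (hε : 0 < ε) {α : ℝ × ℝ} {k : ℤ × ℤ} (hk : k ∈ Shat ε N α) :
    k.1 ≠ 0 ∧ k.2 ≠ 0 := by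
  obtain ⟨h₁, h₂, -⟩ := hk
  constructor <;> rintro h <;> simp only [h, Int.cast_zero, abs_zero] at h₁ h₂ <;>
    nlinarith [pow_pos hε 3, (Nat.cast_nonneg N : (0 : ℝ) ≤ N)]

lemma forall_le_distToInt_of_not_mem_badSet {α : ℝ × ℝ} (hα : α ∉ badSet ε N) :
    (∀ n : ℕ, 1 ≤ n → (n : ℝ) ≤ N / ε →
      ε ^ ((1 : ℝ)/2) * (N : ℝ) ^ (-(1 : ℝ)/4) ≤ (n : ℝ) ^ ((3 : ℝ)/4) * distToInt (n * α.1)) ∧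
    (∀ n : ℕ, 1 ≤ n → (n : ℝ) ≤ N / ε →
      ε ^ ((1 : ℝ)/2) * (N : ℝ) ^ (-(1 : ℝ)/4) ≤ (n : ℝ) ^ ((3 : ℝ)/4) * distToInt (n * α.2)) := by
  simp only [badSet, Set.mem_ofPred_eq, not_exists, not_and, not_or, not_lt] at hα
  exact ⟨fun n h₁ h₂ => (hα n h₁ h₂).1, fun n h₁ h₂ => (hα n h₁ h₂).2⟩

lemma two_mul_le_rpow_mul_abs_sin {a : ℝ}
    (ha : ∀ n : ℕ, 1 ≤ n → (n : ℝ) ≤ N / ε →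
      ε ^ ((1 : ℝ)/2) * (N : ℝ) ^ (-(1 : ℝ)/4) ≤ (n : ℝ) ^ ((3 : ℝ)/4) * distToInt (n * a))
    {j : ℤ} (hj : j ≠ 0) (hjN : |(j : ℝ)| ≤ N / ε) :
    2 * (ε ^ ((1 : ℝ)/2) * (N : ℝ) ^ (-(1 : ℝ)/4))
      ≤ |(j : ℝ)| ^ ((3 : ℝ)/4) * |Real.sin (Real.pi * sfrac (j * a))| := by
  have hcast : ((j.natAbs : ℕ) : ℝ) = |(j : ℝ)| := by rw [Nat.cast_natAbs, Int.cast_abs]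
  have h := ha j.natAbs (Int.natAbs_pos.mpr hj) (hcast ▸ hjN)
  rw [distToInt_natAbs_mul, hcast] at h
  calc 2 * (ε ^ ((1 : ℝ)/2) * (N : ℝ) ^ (-(1 : ℝ)/4))
      ≤ |(j : ℝ)| ^ ((3 : ℝ)/4) * (2 * |sfrac (j * a)|) := by linarith
    _ ≤ |(j : ℝ)| ^ ((3 : ℝ)/4) * |Real.sin (Real.pi * sfrac (j * a))| := by
        gcongr
        exact two_mul_abs_le_abs_sin_pi_mul (abs_sfrac_le_half _)

lemma rpow_half_mul_sq_eq (hε : 0 < ε) (hN : 1 ≤ N) :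
    (N : ℝ) ^ ((1 : ℝ)/2) * (ε ^ ((1 : ℝ)/2) * (N : ℝ) ^ (-(1 : ℝ)/4)) ^ 2 = ε := by
  have hN0 : (0 : ℝ) < N := by exact_mod_cast hN
  rw [mul_pow, ← Real.rpow_natCast, ← Real.rpow_natCast, ← Real.rpow_mul hε.le,
    ← Real.rpow_mul hN0.le, mul_left_comm, ← Real.rpow_add hN0]
  norm_num

lemma abs_psiAmplitude_le (hε : 0 < ε) (hN : 1 ≤ N) {α : ℝ × ℝ} (hα : α ∉ badSet ε N)
    {k : ℤ × ℤ} (hk : k ∈ Shat ε N α) :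
    |psiAmplitude N α k| ≤ |(k.1 : ℝ)| ^ ((3 : ℝ)/4) * |(k.2 : ℝ)| ^ ((3 : ℝ)/4) / (4 * ε) := by
  obtain ⟨hk₁, hk₂⟩ := ne_zero_of_mem_Shat hε hk
  obtain ⟨-, -, hN₁, hN₂, -⟩ := hk
  obtain ⟨hα₁, hα₂⟩ := forall_le_distToInt_of_not_mem_badSet hα
  have h₁ := two_mul_le_rpow_mul_abs_sin hα₁ hk₁ hN₁.le
  have h₂ := two_mul_le_rpow_mul_abs_sin hα₂ hk₂ hN₂.le
  set A := ε ^ ((1 : ℝ)/2) * (N : ℝ) ^ (-(1 : ℝ)/4)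
  have hN0 : (0 : ℝ) < N := by exact_mod_cast hN
  have hA : 0 < 2 * A := by positivity
  have hpos₁ : 0 < |Real.sin (Real.pi * sfrac (k.1 * α.1))| :=
    pos_of_mul_pos_right (hA.trans_le h₁) (by positivity)
  have hpos₂ : 0 < |Real.sin (Real.pi * sfrac (k.2 * α.2))| :=
    pos_of_mul_pos_right (hA.trans_le h₂) (by positivity)
  rw [psiAmplitude, abs_div, abs_mul, abs_mul, abs_mul, abs_of_pos (Real.rpow_pos_of_pos hN0 _),
    div_le_div_iff₀ (by positivity) (by positivity)]
  calc |Real.sin (Real.pi * N * sfrac (k.1 * α.1))| * |Real.sin (Real.pi * N * sfrac (k.2 * α.2))|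
        * (4 * ε)
      ≤ 1 * 1 * (4 * ε) := by
        gcongr <;> exact Real.abs_sin_le_one _
    _ = (N : ℝ) ^ ((1 : ℝ)/2) * (2 * A) * (2 * A) := by
        rw [← rpow_half_mul_sq_eq hε hN]; ring
    _ ≤ (N : ℝ) ^ ((1 : ℝ)/2) * (|(k.1 : ℝ)| ^ ((3 : ℝ)/4) * |Real.sin (Real.pi * sfrac (k.1 * α.1))|)
          * (|(k.2 : ℝ)| ^ ((3 : ℝ)/4) * |Real.sin (Real.pi * sfrac (k.2 * α.2))|) := by
        gcongr
    _ = _ := by ring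

lemma abs_resonantCoeff_le (hK : 0 ≤ K) (hε : 0 < ε) (hN : 1 ≤ N)
    (hcd : ∀ k : ℤ × ℤ, k.1 * k.2 ≠ 0 → |c k - d k| ≤ K * knorm k ^ (-(5 : ℝ)/2))
    {α : ℝ × ℝ} (hα : α ∉ badSet ε N) (k : ℤ × ℤ) :
    |resonantCoeff ε N c d α k| ≤ K / (4 * ε ^ 4 * N) := by
  by_cases hk : k ∈ Shat ε N α
  swap
  · rw [resonantCoeff, Set.indicator_of_notMem hk, abs_zero]
    positivity
  obtain ⟨hk₁, hk₂⟩ := ne_zero_of_mem_Shat hε hk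
  have hN0 : (0 : ℝ) < N := by exact_mod_cast hN
  have hlow : ε ^ 3 * N < knorm k := hk.1.trans_le (abs_le_knorm_fst k)
  rw [resonantCoeff, Set.indicator_of_mem hk, abs_mul]
  calc |c k - d k| * |psiAmplitude N α k|
      ≤ K * knorm k ^ (-(5 : ℝ)/2) *
          (|(k.1 : ℝ)| ^ ((3 : ℝ)/4) * |(k.2 : ℝ)| ^ ((3 : ℝ)/4) / (4 * ε)) :=
        mul_le_mul (hcd k (mul_ne_zero hk₁ hk₂)) (abs_psiAmplitude_le hε hN hα hk)
          (abs_nonneg _) (mul_nonneg hK (Real.rpow_nonneg (Real.sqrt_nonneg _) _))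
    _ = K / (4 * ε) *
          (knorm k ^ (-(5 : ℝ)/2) * (|(k.1 : ℝ)| ^ ((3 : ℝ)/4) * |(k.2 : ℝ)| ^ ((3 : ℝ)/4))) := by
        ring
    _ ≤ K / (4 * ε) * (ε ^ 3 * N)⁻¹ := by
        gcongr
        exact (knorm_rpow_mul_le_inv hk₁).trans (inv_anti₀ (by positivity) hlow.le)
    _ = K / (4 * ε ^ 4 * N) := by
        field_simp

/-! ### Measure of the set of `α` for which a given frequency is resonant -/

lemma abs_sfrac_lt_of_rpow_mul_lt (hε : 0 < ε) (hε₁ : ε < 1) (hN : 1 ≤ N)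
    {j : ℤ} {a : ℝ} (hj : ε ^ 3 * N < |(j : ℝ)|)
    (h : |(j : ℝ)| ^ ((3 : ℝ)/4) * |sfrac (j * a)| < ε ^ (-(2 : ℝ)) * (N : ℝ) ^ (-(1 : ℝ)/4)) :
    |sfrac (j * a)| < 1 / (ε ^ 5 * N) := by
  have hN0 : (0 : ℝ) < N := by exact_mod_cast hN
  set s := |sfrac (j * a)|
  have hX : 0 < ε ^ 3 * (N : ℝ) ^ ((3 : ℝ)/4) := by positivity
  have hpow : ε ^ 3 * (N : ℝ) ^ ((3 : ℝ)/4) ≤ |(j : ℝ)| ^ ((3 : ℝ)/4) :=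
    calc ε ^ 3 * (N : ℝ) ^ ((3 : ℝ)/4) ≤ (ε ^ 3) ^ ((3 : ℝ)/4) * (N : ℝ) ^ ((3 : ℝ)/4) := by
          gcongr
          exact Real.self_le_rpow_of_le_one (by positivity) (pow_le_one₀ hε.le hε₁.le)
            (by norm_num)
      _ = (ε ^ 3 * N) ^ ((3 : ℝ)/4) := (Real.mul_rpow (by positivity) hN0.le).symm
      _ ≤ |(j : ℝ)| ^ ((3 : ℝ)/4) := by gcongr
  have hrhs : ε ^ (-(2 : ℝ)) * (N : ℝ) ^ (-(1 : ℝ)/4)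
      = 1 / (ε ^ 5 * N) * (ε ^ 3 * (N : ℝ) ^ ((3 : ℝ)/4)) := by
    rw [Real.rpow_neg hε.le, show (2 : ℝ) = (2 : ℕ) by norm_num, Real.rpow_natCast,
      show ((3 : ℝ)/4) = -(1 : ℝ)/4 + 1 by norm_num, Real.rpow_add_one hN0.ne']
    field_simp
  have hmul : s * (ε ^ 3 * (N : ℝ) ^ ((3 : ℝ)/4))
      < 1 / (ε ^ 5 * N) * (ε ^ 3 * (N : ℝ) ^ ((3 : ℝ)/4)) := by
    rw [← hrhs]
    calc s * (ε ^ 3 * (N : ℝ) ^ ((3 : ℝ)/4)) ≤ s * |(j : ℝ)| ^ ((3 : ℝ)/4) := by gcongr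
      _ < _ := by rwa [mul_comm]
  exact lt_of_mul_lt_mul_right hmul hX.le

lemma abs_sfrac_lt_of_mem_Shat (hε : 0 < ε) (hε₁ : ε < 1) (hN : 1 ≤ N)
    {α : ℝ × ℝ} {k : ℤ × ℤ} (hk : k ∈ Shat ε N α) :
    |sfrac (k.1 * α.1)| < 1 / (ε ^ 5 * N) ∧ |sfrac (k.2 * α.2)| < 1 / (ε ^ 5 * N) := by
  obtain ⟨h₁, h₂, -, -, h₅, h₆⟩ := hk
  exact ⟨abs_sfrac_lt_of_rpow_mul_lt hε hε₁ hN h₁ h₅, abs_sfrac_lt_of_rpow_mul_lt hε hε₁ hN h₂ h₆⟩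

/-- The set is covered by the `2|j| + 1` intervals of radius `δ / |j|` around the `m / j`. -/
lemma volume_setOf_abs_sfrac_lt_le {j : ℤ} (hj : j ≠ 0) {δ : ℝ} (hδ : 0 < δ) :
    volume {a ∈ Set.Ioc (0 : ℝ) 1 | |sfrac (j * a)| < δ} ≤ ENNReal.ofReal (6 * δ) := by
  set n : ℕ := j.natAbs
  have hn : (1 : ℝ) ≤ n := by exact_mod_cast Int.natAbs_pos.mpr hj
  have hjn : |(j : ℝ)| = n := by rw [Nat.cast_natAbs, Int.cast_abs]
  have hcover : {a ∈ Set.Ioc (0 : ℝ) 1 | |sfrac (j * a)| < δ}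
      ⊆ ⋃ m ∈ Finset.Icc (-(n : ℤ)) n, Metric.ball ((m : ℝ) / j) (δ / n) := by
    rintro a ⟨⟨ha₀, ha₁⟩, hs⟩
    have hja : |(j : ℝ) * a| ≤ n := by
      rw [abs_mul, hjn, abs_of_pos ha₀]
      exact mul_le_of_le_one_right (by positivity) ha₁
    have hm : |(⌈(j : ℝ) * a - 1 / 2⌉ : ℝ)| < n + 1 := by
      have h := abs_sfrac_le_half (j * a)
      rw [sfrac, abs_sub_comm] at h
      linarith [abs_sub_abs_le_abs_sub (⌈(j : ℝ) * a - 1 / 2⌉ : ℝ) ((j : ℝ) * a)]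
    refine Set.mem_biUnion (x := ⌈(j : ℝ) * a - 1 / 2⌉) ?_ ?_
    · have : |⌈(j : ℝ) * a - 1 / 2⌉| < (n : ℤ) + 1 := by exact_mod_cast hm
      rw [Finset.mem_coe, Finset.mem_Icc]
      constructor <;> linarith [abs_lt.mp this]
    · rw [Metric.mem_ball, Real.dist_eq, sub_div' (Int.cast_ne_zero.mpr hj), abs_div, hjn,
        div_lt_div_iff_of_pos_right (by positivity), mul_comm]
      exact hs
  calc volume {a ∈ Set.Ioc (0 : ℝ) 1 | |sfrac (j * a)| < δ}
      ≤ ∑ m ∈ Finset.Icc (-(n : ℤ)) n, volume (Metric.ball ((m : ℝ) / j) (δ / n)) :=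
        (measure_mono hcover).trans (measure_biUnion_finset_le _ _)
    _ = ENNReal.ofReal ((2 * n + 1) * (2 * (δ / n))) := by
        simp only [Real.volume_ball, Finset.sum_const, Int.card_Icc, nsmul_eq_mul]
        rw [show ((n : ℤ) + 1 - -(n : ℤ)).toNat = 2 * n + 1 by omega, ← ENNReal.ofReal_natCast,
          ← ENNReal.ofReal_mul (by positivity)]
        push_cast
        rfl
    _ ≤ ENNReal.ofReal (6 * δ) := by
        refine ENNReal.ofReal_le_ofReal ?_
        rw [show (2 * (n : ℝ) + 1) * (2 * (δ / n)) = (4 + 2 / n) * δ by field_simp; ring]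
        have : 2 / (n : ℝ) ≤ 2 := div_le_self zero_le_two hn
        nlinarith

lemma volume_setOf_mem_Shat_inter_unitCell_le (hε : 0 < ε) (hε₁ : ε < 1) (hN : 1 ≤ N)
    (k : ℤ × ℤ) :
    volume ({α | k ∈ Shat ε N α} ∩ unitCell) ≤ ENNReal.ofReal ((6 / (ε ^ 5 * N)) ^ 2) := by
  by_cases hk : k.1 ≠ 0 ∧ k.2 ≠ 0
  swap
  · have : {α | k ∈ Shat ε N α} = ∅ :=
      Set.eq_empty_of_forall_notMem fun α hα => hk (ne_zero_of_mem_Shat hε hα)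
    simp [this]
  have hδ : 0 < 1 / (ε ^ 5 * N) := by
    have : (0 : ℝ) < N := by exact_mod_cast hN
    positivity
  calc volume ({α | k ∈ Shat ε N α} ∩ unitCell)
      ≤ volume ({a ∈ Set.Ioc (0 : ℝ) 1 | |sfrac (k.1 * a)| < 1 / (ε ^ 5 * N)} ×ˢ
          {a ∈ Set.Ioc (0 : ℝ) 1 | |sfrac (k.2 * a)| < 1 / (ε ^ 5 * N)}) := by
        refine measure_mono fun α ⟨hα, hα₁, hα₂⟩ => ?_
        have := abs_sfrac_lt_of_mem_Shat hε hε₁ hN hα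
        exact ⟨⟨hα₁, this.1⟩, ⟨hα₂, this.2⟩⟩
    _ ≤ ENNReal.ofReal (6 * (1 / (ε ^ 5 * N))) * ENNReal.ofReal (6 * (1 / (ε ^ 5 * N))) := by
        rw [Measure.volume_eq_prod, Measure.prod_prod]
        exact mul_le_mul' (volume_setOf_abs_sfrac_lt_le hk.1 hδ)
          (volume_setOf_abs_sfrac_lt_le hk.2 hδ)
    _ = ENNReal.ofReal ((6 / (ε ^ 5 * N)) ^ 2) := by
        rw [← ENNReal.ofReal_mul (by positivity), mul_one_div, sq]

lemma integral_sq_resonantCoeff_le (hK : 0 ≤ K) (hε : 0 < ε) (hε₁ : ε < 1) (hN : 1 ≤ N)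
    (hcd : ∀ k : ℤ × ℤ, k.1 * k.2 ≠ 0 → |c k - d k| ≤ K * knorm k ^ (-(5 : ℝ)/2)) (k : ℤ × ℤ) :
    ∫ α in unitCell \ badSet ε N, resonantCoeff ε N c d α k ^ 2
      ≤ (6 / (ε ^ 5 * N)) ^ 2 * (K / (4 * ε ^ 4 * N)) ^ 2 := by
  set S := {α | k ∈ Shat ε N α} ∩ (unitCell \ badSet ε N)
  have hS : volume S ≤ ENNReal.ofReal ((6 / (ε ^ 5 * N)) ^ 2) :=
    (measure_mono (Set.inter_subset_inter_right _ Set.sdiff_subset)).trans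
      (volume_setOf_mem_Shat_inter_unitCell_le hε hε₁ hN k)
  rw [setIntegral_eq_of_subset_of_forall_sdiff_eq_zero (s := S)
    (measurableSet_unitCell.diff (measurableSet_badSet ε N)) Set.inter_subset_right
    fun α hα => by
      rw [resonantCoeff, Set.indicator_of_notMem (s := Shat ε N α) fun hk => hα.2 ⟨hk, hα.1⟩,
        zero_pow two_ne_zero]]
  refine (le_abs_self _).trans ?_
  rw [← Real.norm_eq_abs, mul_comm]
  refine (norm_setIntegral_le_of_norm_le_const (hS.trans_lt ENNReal.ofReal_lt_top)
    fun α hα => ?_).trans (mul_le_mul_of_nonneg_left ?_ (sq_nonneg _))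
  · rw [Real.norm_eq_abs, abs_pow]
    exact pow_le_pow_left₀ (abs_nonneg _) (abs_resonantCoeff_le hK hε hN hcd hα.2.2 k) 2
  · exact ENNReal.toReal_le_of_le_ofReal (sq_nonneg _) hS

lemma two_mul_sq_mul_le_div (hε : 0 < ε) (hε₁ : ε < 1) (hN : 1 ≤ N) :
    2 * ((2 * (⌈(N : ℝ) / ε⌉₊ : ℝ) + 1) ^ 2 * ((6 / (ε ^ 5 * N)) ^ 2 * (K / (4 * ε ^ 4 * N)) ^ 2))
      ≤ (225 * K ^ 2 / (2 * ε ^ 20) + 1) / N := by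
  have hN₁ : (1 : ℝ) ≤ N := by exact_mod_cast hN
  have hNε : 1 ≤ (N : ℝ) / ε := by rw [le_div_iff₀ hε]; linarith
  have hM : 2 * (⌈(N : ℝ) / ε⌉₊ : ℝ) + 1 ≤ 5 * N / ε := by
    have := Nat.ceil_lt_add_one (by positivity : 0 ≤ (N : ℝ) / ε)
    rw [mul_div_assoc]
    linarith
  calc 2 * ((2 * (⌈(N : ℝ) / ε⌉₊ : ℝ) + 1) ^ 2 *
        ((6 / (ε ^ 5 * N)) ^ 2 * (K / (4 * ε ^ 4 * N)) ^ 2))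
      ≤ 2 * ((5 * N / ε) ^ 2 * ((6 / (ε ^ 5 * N)) ^ 2 * (K / (4 * ε ^ 4 * N)) ^ 2)) := by
        gcongr
    _ = 225 * K ^ 2 / (2 * ε ^ 20) / N / N := by
        field_simp
        ring
    _ ≤ 225 * K ^ 2 / (2 * ε ^ 20) / N := div_le_self (by positivity) hN₁
    _ ≤ (225 * K ^ 2 / (2 * ε ^ 20) + 1) / N := by gcongr; linarith

end Resonance

theorem stmt12_general (K : ℝ) (ε : ℝ) (hε : ε ∈ Set.Ioo (0 : ℝ) 1) :
    ∃ C : ℝ, 0 < C ∧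
      ∀ c d : ℤ × ℤ → ℝ,
        (∀ k : ℤ × ℤ, k.1 * k.2 ≠ 0 → |c k - d k| ≤ K * knorm k ^ (-(5 : ℝ)/2)) →
        ∀ N : ℕ, 1 ≤ N →
          (∫ p : (ℝ × ℝ) × (ℝ × ℝ),
              (∑' k : ℤ × ℤ,
                Set.indicator (Shat ε N p.2)
                  (fun k' => (c k' - d k') * psiterm N p.1 p.2 k') k) ^ 2
              ∂(μE ε N))
            ≤ C / N := by
  obtain ⟨hε₀, hε₁⟩ := hε
  refine ⟨225 * K ^ 2 / (2 * ε ^ 20) + 1, by positivity, fun c d hcd N hN => ?_⟩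
  have hK := nonneg_of_forall_abs_sub_le_mul_knorm_rpow hcd
  have hB : ∀ k, ∀ᵐ α ∂volume.restrict (unitCell \ badSet ε N),
      |resonantCoeff ε N c d α k| ≤ K / (4 * ε ^ 4 * N) := fun k =>
    ae_restrict_of_forall_mem (measurableSet_unitCell.diff (measurableSet_badSet ε N))
      fun α hα => abs_resonantCoeff_le hK hε₀ hN hcd hα.2 k
  simp only [μE, tsum_indicator_psiterm_eq]
  calc _ ≤ 2 * ∑ k ∈ intBox ⌈(N : ℝ) / ε⌉₊,
        ∫ α in unitCell \ badSet ε N, resonantCoeff ε N c d α k ^ 2 :=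
        integral_prod_sq_sum_cos_le (fun _ => neg_mem_intBox) (measurable_resonantCoeff ε N c d)
          (measurable_psiPhase N) hB
    _ ≤ 2 * ∑ _k ∈ intBox ⌈(N : ℝ) / ε⌉₊,
        (6 / (ε ^ 5 * N)) ^ 2 * (K / (4 * ε ^ 4 * N)) ^ 2 := by
        gcongr with k
        exact integral_sq_resonantCoeff_le hK hε₀ hε₁ hN hcd k
    _ ≤ _ := by
        rw [Finset.sum_const, card_intBox, nsmul_eq_mul]
        push_cast
        exact two_mul_sq_mul_le_div hε₀ hε₁ hN

/-- Let `(c_k)` and `(d_k)` satisfy `|c_k - d_k| ≤ K|k|^{-5/2}` for `k₁k₂ ≠ 0`, and fix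
`ε ∈ (0,1)`.  Then there is a constant `C = C(K,ε)` such that for all `N ≥ 1`,
`‖ Σ_{k ∈ Ŝ(N,α)} (c_k - d_k) ψ_k ‖²_{L²(𝕋² × (𝕋² ∖ E_N(ε)))} ≤ C·N⁻¹`. -/
theorem stmt12 (K : ℝ) (hK : 0 < K) (ε : ℝ) (hε : ε ∈ Set.Ioo (0 : ℝ) 1) :
    ∃ C : ℝ, 0 < C ∧
      ∀ c d : ℤ × ℤ → ℝ,
        (∀ k : ℤ × ℤ, k.1 * k.2 ≠ 0 → |c k - d k| ≤ K * knorm k ^ (-(5 : ℝ)/2)) →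
        ∀ N : ℕ, 1 ≤ N →
          (∫ p : (ℝ × ℝ) × (ℝ × ℝ),
              (∑' k : ℤ × ℤ,
                Set.indicator (Shat ε N p.2)
                  (fun k' => (c k' - d k') * psiterm N p.1 p.2 k') k) ^ 2
              ∂(μE ε N))
            ≤ C / N :=
  stmt12_general K ε hε
end

section
/- Fix ε ∈ (0,1) and a positive integer N, and let α = (α₁,α₂) ∈ 𝕋² ∖ E_N(ε). Then for each i ∈ {1,2} and every nonzero integer vector (k,l) ∈ ℤ², one has max( |k|/N , N·|kα_i + l| ) ≥ ε³. Equivalently, every nonzero vector of the lattice g_{ln N}·Λ_{α_i}·ℤ² has supremum norm at least ε³, where g_T = diag(e^{−T}, e^{T}) and Λ_{α} is the lower-triangular unipotent matrix with rows (1,0) and (α,1); in particular these lattices contain no short vectors, uniformly in N. -/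
open MeasureTheory Filter

/-- Fix `ε ∈ (0,1)`, `N ≥ 1` and `α = (α₁,α₂) ∈ 𝕋² ∖ E_N(ε)` (expressed through
representatives `α : Fin 2 → ℝ`: for every integer `1 ≤ n ≤ N/ε` and each `i`,
`n^{3/4}·‖nα_i‖ ≥ ε^{1/2}·N^{-1/4}`).  Then for each `i` and every nonzero `(k,l) ∈ ℤ²`,
`max(|k|/N, N·|kα_i + l|) ≥ ε³`; equivalently every nonzero vector
`g_{ln N}Λ_{α_i}(k,l)ᵀ = (k/N, N(kα_i+l))` of the lattice `g_{ln N}Λ_{α_i}ℤ²` has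
supremum norm at least `ε³`. -/
theorem stmt13 (ε : ℝ) (hε : ε ∈ Set.Ioo (0 : ℝ) 1) (N : ℕ) (hN : 1 ≤ N)
    (α : Fin 2 → ℝ)
    (hα : ∀ n : ℕ, 1 ≤ n → (n : ℝ) ≤ (N : ℝ) / ε → ∀ i : Fin 2,
      ε ^ ((1 : ℝ)/2) * (N : ℝ) ^ (-(1 : ℝ)/4)
        ≤ (n : ℝ) ^ ((3 : ℝ)/4) * distToInt ((n : ℝ) * α i)) :
    ∀ i : Fin 2, ∀ k l : ℤ, ¬(k = 0 ∧ l = 0) →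
      ε ^ 3 ≤ max (|(k : ℝ)| / N) ((N : ℝ) * |(k : ℝ) * α i + (l : ℝ)|) := by
  obtain ⟨hε0, hε1⟩ := hε
  have hN0 : (0:ℝ) < N := by exact_mod_cast hN
  have hN' : (1:ℝ) ≤ N := by exact_mod_cast hN
  have hε3 : ε ^ 3 ≤ 1 := by nlinarith [pow_le_one₀ hε0.le hε1.le (n := 3)]
  intro i k l hkl
  by_cases hk : k = 0
  · subst hk
    have hl : l ≠ 0 := fun h => hkl ⟨rfl, h⟩
    have h1 : (1:ℝ) ≤ |(l:ℝ)| := by exact_mod_cast Int.one_le_abs hl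
    have : (1:ℝ) ≤ (N:ℝ) * |(0:ℤ) * α i + (l:ℝ)| := by
      push_cast
      rw [zero_mul, zero_add]
      nlinarith [mul_le_mul hN' h1 (by norm_num : (0:ℝ) ≤ 1) (by linarith : (0:ℝ) ≤ (N:ℝ))]
    refine le_max_of_le_right ?_
    push_cast at this ⊢
    linarith
  · by_cases hbig : ε ^ 3 ≤ |(k:ℝ)| / N
    · exact le_max_of_le_left hbig
    push_neg at hbig
    set n : ℕ := k.natAbs with hn
    have hnk : (n:ℝ) = |(k:ℝ)| := by
      rw [hn, Nat.cast_natAbs]; push_cast; ring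
    have hn1 : 1 ≤ n := Int.natAbs_pos.mpr hk
    have hn0 : (0:ℝ) < n := by exact_mod_cast hn1
    have hnlt : (n:ℝ) < ε ^ 3 * N := by
      rw [hnk]; calc |(k:ℝ)| = (|(k:ℝ)| / N) * N := by field_simp
        _ < ε ^ 3 * N := by apply mul_lt_mul_of_pos_right hbig hN0
    have hnN : (n:ℝ) ≤ (N:ℝ) / ε := by
      have : ε ^ 3 * (N:ℝ) ≤ N / ε := by
        rw [le_div_iff₀ hε0]; nlinarith
      linarith
    have key := hα n hn1 hnN i
    -- distToInt (n * α i) ≤ |k * α i + l|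
    set d : ℝ := distToInt ((n:ℝ) * α i) with hd
    have hdle : d ≤ |(k:ℝ) * α i + (l:ℝ)| := by
      rcases lt_or_gt_of_ne (fun h : k = 0 => hk h) with hkneg | hkpos
      · have : (n:ℝ) = -(k:ℝ) := by
          rw [hnk, abs_of_neg (by exact_mod_cast hkneg : (k:ℝ) < 0)]
        have h2 : d ≤ |(n:ℝ) * α i - (l:ℤ)| := round_le _ _
        rw [this] at h2
        calc d ≤ |(-(k:ℝ)) * α i - (l:ℝ)| := h2
          _ = |(k:ℝ) * α i + (l:ℝ)| := by rw [← abs_neg]; ring_nf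
      · have : (n:ℝ) = (k:ℝ) := by
          rw [hnk, abs_of_pos (by exact_mod_cast hkpos : (0:ℝ) < k)]
        have h2 : d ≤ |(n:ℝ) * α i - ((-l : ℤ):ℝ)| := round_le _ _
        rw [this] at h2
        calc d ≤ |(k:ℝ) * α i - ((-l : ℤ):ℝ)| := h2
          _ = |(k:ℝ) * α i + (l:ℝ)| := by push_cast; ring_nf
    refine le_max_of_le_right ?_
    -- key: ε^{1/2} N^{-1/4} ≤ n^{3/4} d
    -- n^{3/4} ≤ ε^{9/4} N^{3/4}
    have h34 : (n:ℝ) ^ ((3:ℝ)/4) ≤ ε ^ ((9:ℝ)/4) * (N:ℝ) ^ ((3:ℝ)/4) := by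
      have h1 : (n:ℝ) ^ ((3:ℝ)/4) ≤ (ε ^ 3 * N) ^ ((3:ℝ)/4) :=
        Real.rpow_le_rpow hn0.le hnlt.le (by norm_num)
      have h2 : (ε ^ 3 * (N:ℝ)) ^ ((3:ℝ)/4)
          = (ε ^ 3) ^ ((3:ℝ)/4) * (N:ℝ) ^ ((3:ℝ)/4) :=
        Real.mul_rpow (by positivity) hN0.le
      have h3 : (ε ^ 3 : ℝ) ^ ((3:ℝ)/4) = ε ^ ((9:ℝ)/4) := by
        rw [← Real.rpow_natCast ε 3, ← Real.rpow_mul hε0.le]; norm_num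
      rw [h2, h3] at h1; exact h1
    -- ε^{21/4} ≤ ε^{1/2}
    have hε2114 : ε ^ ((21:ℝ)/4) ≤ ε ^ ((1:ℝ)/2) :=
      Real.rpow_le_rpow_of_exponent_ge hε0 hε1.le (by norm_num)
    -- ε^3 * n^{3/4} ≤ ε^{1/2} * N^{3/4}
    have hmain : ε ^ 3 * (n:ℝ) ^ ((3:ℝ)/4) ≤ ε ^ ((1:ℝ)/2) * (N:ℝ) ^ ((3:ℝ)/4) := by
      have hεε : (ε:ℝ) ^ 3 * ε ^ ((9:ℝ)/4) = ε ^ ((21:ℝ)/4) := by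
        rw [← Real.rpow_natCast ε 3, ← Real.rpow_add hε0]; norm_num
      have hNp : (0:ℝ) ≤ (N:ℝ) ^ ((3:ℝ)/4) := by positivity
      calc ε ^ 3 * (n:ℝ) ^ ((3:ℝ)/4)
          ≤ ε ^ 3 * (ε ^ ((9:ℝ)/4) * (N:ℝ) ^ ((3:ℝ)/4)) := by
            apply mul_le_mul_of_nonneg_left h34 (by positivity)
        _ = ε ^ ((21:ℝ)/4) * (N:ℝ) ^ ((3:ℝ)/4) := by rw [← mul_assoc, hεε]
        _ ≤ ε ^ ((1:ℝ)/2) * (N:ℝ) ^ ((3:ℝ)/4) :=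
            mul_le_mul_of_nonneg_right hε2114 hNp
    -- N^{3/4} = N * N^{-1/4}
    have hNsplit : (N:ℝ) ^ ((3:ℝ)/4) = (N:ℝ) * (N:ℝ) ^ (-(1:ℝ)/4) := by
      rw [show (3:ℝ)/4 = 1 + (-1)/4 by norm_num, Real.rpow_add hN0, Real.rpow_one]
    -- chain: ε^3 * n^{3/4} ≤ ε^{1/2} * N * N^{-1/4} = N * (ε^{1/2} N^{-1/4})
    --        ≤ N * n^{3/4} * d
    have hfinal : ε ^ 3 * (n:ℝ) ^ ((3:ℝ)/4) ≤ (n:ℝ) ^ ((3:ℝ)/4) * ((N:ℝ) * d) := by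
      calc ε ^ 3 * (n:ℝ) ^ ((3:ℝ)/4)
          ≤ ε ^ ((1:ℝ)/2) * (N:ℝ) ^ ((3:ℝ)/4) := hmain
        _ = (N:ℝ) * (ε ^ ((1:ℝ)/2) * (N:ℝ) ^ (-(1:ℝ)/4)) := by rw [hNsplit]; ring
        _ ≤ (N:ℝ) * ((n:ℝ) ^ ((3:ℝ)/4) * d) := by
            apply mul_le_mul_of_nonneg_left key hN0.le
        _ = (n:ℝ) ^ ((3:ℝ)/4) * ((N:ℝ) * d) := by ring
    have hn34 : (0:ℝ) < (n:ℝ) ^ ((3:ℝ)/4) := by positivity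
    have : ε ^ 3 ≤ (N:ℝ) * d := by
      nlinarith [hfinal, hn34]
    calc ε ^ 3 ≤ (N:ℝ) * d := this
      _ ≤ (N:ℝ) * |(k:ℝ) * α i + (l:ℝ)| :=
          mul_le_mul_of_nonneg_left hdle hN0.le
end

section
/- Let C ⊂ ℝ² be a compact, symmetric (C = −C), strictly convex body with nonempty interior whose support function P(t) = sup_{x ∈ C} ⟨t,x⟩ is real-analytic on ℝ² ∖ {0}. Let 𝒵 denote the set of primitive vectors of ℤ² whose first nonzero coordinate is positive. For a pair p = (p₁,p₂) ∈ 𝒵 with p₁, p₂ ≥ 1 and m = (m¹, m²) ∈ 𝒵 × 𝒵, define Q_{p,m} : ℝ² × ℝ² → ℝ by Q_{p,m}(z₁, z₂) = P( p₁⟨m¹, z₁⟩ , p₂⟨m², z₂⟩ ). If (p^{(1)}, m^{(1)}), …, (p^{(K)}, m^{(K)}) are pairwise distinct such pairs and l₁, …, l_K are real numbers with Σ_{i=1}^{K} l_i · Q_{p^{(i)}, m^{(i)}} ≡ 0 identically on ℝ² × ℝ², then l₁ = ⋯ = l_K = 0. -/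
/-!
Choose `u = (1, s)` and `v = (1, t)` with `s, t > 0` small: every vector of `𝒵` pairs
positively with them, so `αᵢ = pᵢ₁⟨mᵢ¹, u⟩` and `βᵢ = pᵢ₂⟨mᵢ², v⟩` are positive, and avoiding
finitely many values of `s` and `t` makes the ratios `rᵢ = αᵢ / βᵢ` pairwise distinct; this is
where primitivity, the sign normalization of `𝒵` and the distinctness of the pairs enter.
On `z₁ = x • u`, `z₂ = v` homogeneity of `P` turns the relation into `∑ lᵢ βᵢ g (rᵢ x) = 0` for
`g x = P (x, 1)`, and its `k`-th derivative at `0` reads `(∑ lᵢ βᵢ rᵢᵏ) g⁽ᵏ⁾(0) = 0`.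
The analytic function `g` is not a polynomial: `g x / x` tends to `P (1, 0)` at `+∞` and to
`-P (-1, 0)` at `-∞`, which differ because `C` has positive width. Hence `g⁽ᵏ⁾(0) ≠ 0` for
infinitely many `k`, and comparing the dominant terms of `∑ cᵢ rᵢᵏ = 0` along those `k` gives
`lᵢ βᵢ = 0`.
-/

open MeasureTheory

/-- Euclidean inner product on `ℝ²` (realized as `ℝ × ℝ`). -/
def euclInner (u v : ℝ × ℝ) : ℝ := u.1 * v.1 + u.2 * v.2

/-- A vector of `ℤ²` is in `𝒵` if it is primitive (coprime coordinates) and its first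
nonzero coordinate is positive. -/
def IsPrimitivePos (m : ℤ × ℤ) : Prop :=
  IsCoprime m.1 m.2 ∧ (0 < m.1 ∨ (m.1 = 0 ∧ 0 < m.2))

/-- The function `Q_{p,m}(z₁,z₂) = P(p₁⟨m¹,z₁⟩, p₂⟨m²,z₂⟩)` associated to a support
function `P`, a pair `p = (p₁,p₂)` and a pair of integer vectors `m = (m¹,m²)`. -/
noncomputable def Qfun (P : ℝ × ℝ → ℝ) (p : ℤ × ℤ) (m : (ℤ × ℤ) × (ℤ × ℤ))
    (z₁ z₂ : ℝ × ℝ) : ℝ :=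
  P ((p.1 : ℝ) * euclInner ((m.1.1 : ℝ), (m.1.2 : ℝ)) z₁,
     (p.2 : ℝ) * euclInner ((m.2.1 : ℝ), (m.2.2 : ℝ)) z₂)

section

open Filter Topology Polynomial
open scoped ContDiff

theorem exists_polynomial_eq_of_iteratedDeriv_eq_zero {𝕜 : Type*} [NontriviallyNormedField 𝕜]
    [CharZero 𝕜] [CompleteSpace 𝕜] [PreconnectedSpace 𝕜] {f : 𝕜 → 𝕜}
    (hf : ∀ x, AnalyticAt 𝕜 f x) {N : ℕ} (hN : ∀ k, N ≤ k → iteratedDeriv k f 0 = 0) :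
    ∃ q : 𝕜[X], ∀ x, f x = q.eval x := by
  set T : 𝕜 → 𝕜 := fun z => ∑ i ∈ Finset.range N, (z ^ i / i.factorial) • iteratedDeriv i f 0
  have hT : ∀ n (z : 𝕜),
      ∑ i ∈ Finset.range (N + n), (z ^ i / i.factorial) • iteratedDeriv i f 0 = T z := by
    intro n z
    rw [Finset.sum_range_add, add_eq_left.mpr (Finset.sum_eq_zero fun i _ => by
      rw [hN _ (Nat.le_add_right N i), smul_zero])]
  have hTa : ∀ x, AnalyticAt 𝕜 T x := fun x => Finset.analyticAt_fun_sum _ fun i _ => by fun_prop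
  have horder : analyticOrderAt (f - T) 0 = ⊤ := by
    refine ENat.eq_top_iff_forall_ge.mpr fun n => ?_
    obtain ⟨F, hFa, hF⟩ := (hf 0).exists_eventuallyEq_sum_add_pow_mul (N + n)
    refine (natCast_le_analyticOrderAt ((hf 0).sub (hTa 0))).mpr
      ⟨fun z => z ^ N • F z, by fun_prop, ?_⟩
    filter_upwards [hF] with z hz
    rw [Pi.sub_apply, hz, hT, sub_zero, smul_smul, ← pow_add, add_comm n N, add_sub_cancel_left]
  have hfT : f = T := sub_eq_zero.mp <|
    (AnalyticOnNhd.analyticOrderAt_eq_top_iff_eq_zero 0 fun x => (hf x).sub (hTa x)).mp horder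
  refine ⟨∑ i ∈ Finset.range N, C (iteratedDeriv i f 0 / i.factorial) * X ^ i, fun x => ?_⟩
  rw [congrFun hfT x]
  simp only [T, eval_finsetSum, eval_mul, eval_C, eval_pow, eval_X, smul_eq_mul]
  exact Finset.sum_congr rfl fun i _ => by ring

theorem Polynomial.eq_of_tendsto_eval_div_atTop_atBot (q : ℝ[X]) {a b : ℝ}
    (ha : Tendsto (fun x => q.eval x / x) atTop (𝓝 a))
    (hb : Tendsto (fun x => q.eval x / x) atBot (𝓝 b)) : a = b := by
  have ha' : Tendsto (fun x => q.eval x / (X : ℝ[X]).eval x) atTop (𝓝 a) := by simpa using ha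
  have hb' : Tendsto (fun x => q.eval x / (X : ℝ[X]).eval x) atBot (𝓝 b) := by simpa using hb
  rcases lt_trichotomy q.degree (X : ℝ[X]).degree with hlt | heq | hgt
  · rw [tendsto_nhds_unique ha' (div_tendsto_atTop_zero_of_degree_lt q X hlt),
      tendsto_nhds_unique hb' (div_tendsto_atBot_zero_of_degree_lt q X hlt)]
  · rw [tendsto_nhds_unique ha' (div_tendsto_atTop_leadingCoeff_div_of_degree_eq q X heq),
      tendsto_nhds_unique hb' (div_tendsto_atBot_leadingCoeff_div_of_degree_eq q X heq)]
  · exact absurd ha'.abs (not_tendsto_nhds_of_tendsto_atTop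
      (abs_div_tendsto_atTop_atTop_of_degree_gt q X hgt X_ne_zero) _)

theorem infinite_setOf_iteratedDeriv_ne_zero {f : ℝ → ℝ} (hf : ∀ x, AnalyticAt ℝ f x) {a b : ℝ}
    (ha : Tendsto (fun x => f x / x) atTop (𝓝 a)) (hb : Tendsto (fun x => f x / x) atBot (𝓝 b))
    (hab : a ≠ b) : {k | iteratedDeriv k f 0 ≠ 0}.Infinite := by
  intro hfin
  obtain ⟨N, hN⟩ := hfin.bddAbove
  obtain ⟨q, hq⟩ := exists_polynomial_eq_of_iteratedDeriv_eq_zero hf (N := N + 1) fun k hk => by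
    by_contra h
    exact absurd (hN h) (by omega)
  simp only [hq] at ha hb
  exact hab (q.eq_of_tendsto_eval_div_atTop_atBot ha hb)

theorem eq_zero_of_forall_sum_mul_pow_eq_zero {ι : Type*} [Fintype ι] {r c : ι → ℝ}
    (hr : ∀ i, 0 < r i) (hinj : Function.Injective r) {S : Set ℕ} (hS : S.Infinite)
    (h : ∀ k ∈ S, ∑ i, c i * r i ^ k = 0) : c = 0 := by
  classical
  by_contra hc
  obtain ⟨i₀, hi₀, hmax⟩ := Finset.exists_max_image {i | c i ≠ 0} r <| by
    obtain ⟨i, hi⟩ := Function.ne_iff.mp hc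
    exact ⟨i, by simpa using hi⟩
  simp only [Finset.mem_filter, Finset.mem_univ, true_and] at hi₀ hmax
  -- dividing by `r i₀ ^ k`, every term but the `i₀`-th decays geometrically
  have hterm : ∀ i, Tendsto (fun k => c i * (r i / r i₀) ^ k) atTop
      (𝓝 (if i = i₀ then c i else 0)) := by
    intro i
    by_cases hii : i = i₀
    · simp [hii, div_self (hr i₀).ne']
    by_cases hci : c i = 0
    · simp [hci]
    have hlt : r i / r i₀ < 1 :=
      (div_lt_one (hr i₀)).mpr (lt_of_le_of_ne (hmax i hci) (hinj.ne hii))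
    simpa [hii] using (tendsto_pow_atTop_nhds_zero_of_lt_one
      (div_pos (hr i) (hr i₀)).le hlt).const_mul (c i)
  have hlim := tendsto_finsetSum Finset.univ fun i _ => hterm i
  rw [Finset.sum_ite_eq' Finset.univ i₀, if_pos (Finset.mem_univ _)] at hlim
  refine hi₀ (tendsto_nhds_unique_of_frequently_eq hlim tendsto_const_nhds ?_)
  refine (Nat.frequently_atTop_iff_infinite.mpr hS).mono fun k hk => ?_
  simp only [div_pow, mul_div_assoc', ← Finset.sum_div, h k hk, zero_div]

theorem eq_zero_of_forall_sum_mul_comp_mul_eq_zero {ι : Type*} [Fintype ι] {f : ℝ → ℝ}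
    (hf : ContDiff ℝ ∞ f) (hinf : {k | iteratedDeriv k f 0 ≠ 0}.Infinite) {r c : ι → ℝ}
    (hr : ∀ i, 0 < r i) (hinj : Function.Injective r)
    (h : ∀ x, ∑ i, c i * f (r i * x) = 0) : c = 0 := by
  refine eq_zero_of_forall_sum_mul_pow_eq_zero hr hinj hinf fun k hk => ?_
  have hderiv : iteratedDeriv k (fun x => ∑ i, c i * f (r i * x)) 0
      = (∑ i, c i * r i ^ k) * iteratedDeriv k f 0 := by
    have hfk : ContDiff ℝ k f := hf.of_le (mod_cast le_top)
    rw [iteratedDeriv_fun_sum fun i _ => by fun_prop, Finset.sum_mul]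
    refine Finset.sum_congr rfl fun i _ => ?_
    simp only [iteratedDeriv_const_mul_field, iteratedDeriv_comp_const_mul hfk, mul_zero, mul_assoc]
  rw [funext h, iteratedDeriv_const, ite_self] at hderiv
  exact (mul_eq_zero.mp hderiv.symm).resolve_right hk

section SupportFunction

variable {C : Set (ℝ × ℝ)} {P : ℝ × ℝ → ℝ}

open Pointwise in
theorem support_smul (hP : ∀ t, P t = sSup ((fun x => euclInner t x) '' C)) {c : ℝ} (hc : 0 ≤ c)
    (t : ℝ × ℝ) : P (c • t) = c * P t := by
  have himage : (fun x => euclInner (c • t) x) '' C = c • (fun x => euclInner t x) '' C := by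
    rw [← Set.image_smul, Set.image_image]
    simp only [euclInner, Prod.smul_fst, Prod.smul_snd, smul_eq_mul, mul_add, mul_assoc]
  rw [hP, hP, himage, Real.sSup_smul_of_nonneg hc, smul_eq_mul]

theorem inner_le_support (hcpt : IsCompact C) (hP : ∀ t, P t = sSup ((fun x => euclInner t x) '' C))
    (t : ℝ × ℝ) {x : ℝ × ℝ} (hx : x ∈ C) : euclInner t x ≤ P t := by
  have hcont : Continuous fun x => euclInner t x := by unfold euclInner; fun_prop
  exact hP t ▸ le_csSup (hcpt.image hcont).bddAbove ⟨x, hx, rfl⟩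

theorem support_add_support_neg_pos (hcpt : IsCompact C) (hint : (interior C).Nonempty)
    (hP : ∀ t, P t = sSup ((fun x => euclInner t x) '' C)) {t : ℝ × ℝ} (ht : t ≠ 0) :
    0 < P t + P (-t) := by
  obtain ⟨z, hz⟩ := hint
  have hseg : ∀ᶠ s in 𝓝 (0 : ℝ), z + s • t ∈ C ∧ z - s • t ∈ C := by
    have hC : C ∈ 𝓝 z := mem_interior_iff_mem_nhds.mp hz
    have hadd : Tendsto (fun s : ℝ => z + s • t) (𝓝 0) (𝓝 z) :=
      (by fun_prop : Continuous fun s : ℝ => z + s • t).tendsto' 0 z (by simp)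
    have hsub : Tendsto (fun s : ℝ => z - s • t) (𝓝 0) (𝓝 z) :=
      (by fun_prop : Continuous fun s : ℝ => z - s • t).tendsto' 0 z (by simp)
    exact (hadd.eventually hC).and (hsub.eventually hC)
  obtain ⟨s, ⟨hadd, hsub⟩, hs⟩ := ((hseg.filter_mono nhdsWithin_le_nhds).and
    (self_mem_nhdsWithin : ∀ᶠ s in 𝓝[>] (0 : ℝ), 0 < s)).exists
  have htt : 0 < euclInner t t := by
    obtain ⟨a, b⟩ := t
    simp only [euclInner, ne_eq, Prod.mk_eq_zero, not_and_or] at ht ⊢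
    rcases ht with h | h <;> nlinarith [mul_self_pos.mpr h, mul_self_nonneg a, mul_self_nonneg b]
  have hPt := inner_le_support hcpt hP t hadd
  have hPt' := inner_le_support hcpt hP (-t) hsub
  simp only [euclInner, Prod.fst_add, Prod.snd_add, Prod.fst_sub, Prod.snd_sub, Prod.smul_fst,
    Prod.smul_snd, Prod.fst_neg, Prod.snd_neg, smul_eq_mul] at hPt hPt' htt
  nlinarith [mul_pos hs htt]

theorem tendsto_support_div_atTop (hP : ∀ t, P t = sSup ((fun x => euclInner t x) '' C))
    (hcont : ContinuousAt P (1, 0)) :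
    Tendsto (fun x => P (x, 1) / x) atTop (𝓝 (P (1, 0))) := by
  have hlim : Tendsto (fun x : ℝ => P (1, x⁻¹)) atTop (𝓝 (P (1, 0))) :=
    hcont.tendsto.comp (tendsto_const_nhds.prodMk_nhds tendsto_inv_atTop_zero)
  refine hlim.congr' ((eventually_gt_atTop 0).mono fun x hx => ?_)
  rw [eq_div_iff hx.ne', mul_comm, ← support_smul hP hx.le]
  simp [hx.ne']

theorem tendsto_support_div_atBot (hP : ∀ t, P t = sSup ((fun x => euclInner t x) '' C))
    (hcont : ContinuousAt P (-1, 0)) :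
    Tendsto (fun x => P (x, 1) / x) atBot (𝓝 (-P (-1, 0))) := by
  have hlim : Tendsto (fun x : ℝ => -P (-1, (-x)⁻¹)) atBot (𝓝 (-P (-1, 0))) :=
    (hcont.tendsto.comp (tendsto_const_nhds.prodMk_nhds
      (tendsto_inv_atTop_zero.comp tendsto_neg_atBot_atTop))).neg
  refine hlim.congr' ((eventually_lt_atBot 0).mono fun x hx => ?_)
  rw [eq_div_iff hx.ne, neg_mul, mul_comm, ← neg_mul, ← support_smul hP (neg_nonneg.mpr hx.le)]
  simp [hx.ne]

end SupportFunction

def castVec (a : ℤ × ℤ) : ℝ × ℝ := ((a.1 : ℝ), (a.2 : ℝ))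

theorem Qfun_smul_left (P : ℝ × ℝ → ℝ) (p : ℤ × ℤ) (m : (ℤ × ℤ) × (ℤ × ℤ)) (x : ℝ)
    (u v : ℝ × ℝ) :
    Qfun P p m (x • u) v =
      P (x * (p.1 * euclInner (castVec m.1) u), p.2 * euclInner (castVec m.2) v) := by
  simp only [Qfun, castVec, euclInner, Prod.smul_fst, Prod.smul_snd, smul_eq_mul]
  ring_nf

theorem euclInner_smul_sub_smul (a b : ℝ) (x y u : ℝ × ℝ) :
    euclInner (a • x - b • y) u = a * euclInner x u - b * euclInner y u := by
  simp only [euclInner, Prod.fst_sub, Prod.snd_sub, Prod.smul_fst, Prod.smul_snd, smul_eq_mul]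
  ring

theorem eventually_inner_ne_zero {w : ℝ × ℝ} (hw : w ≠ 0) :
    ∀ᶠ s in 𝓝[>] (0 : ℝ), euclInner w (1, s) ≠ 0 := by
  by_cases h1 : w.1 = 0
  · have h2 : w.2 ≠ 0 := fun h2 => hw (Prod.ext h1 h2)
    filter_upwards [self_mem_nhdsWithin] with s (hs : 0 < s)
    simp [euclInner, h1, h2, hs.ne']
  · have hcont : Continuous fun s : ℝ => euclInner w (1, s) := by unfold euclInner; fun_prop
    exact (hcont.continuousAt.eventually_ne (by simpa [euclInner] using h1)).filter_mono
      nhdsWithin_le_nhds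

namespace IsPrimitivePos

variable {a b : ℤ × ℤ}

theorem castVec_ne_zero (ha : IsPrimitivePos a) : castVec a ≠ 0 := by
  intro h
  have h1 : (a.1 : ℝ) = 0 := congrArg Prod.fst h
  have h2 : (a.2 : ℝ) = 0 := congrArg Prod.snd h
  norm_cast at h1 h2
  rcases ha.2 with h | h <;> omega

theorem eventually_inner_castVec_pos (ha : IsPrimitivePos a) :
    ∀ᶠ s in 𝓝[>] (0 : ℝ), 0 < euclInner (castVec a) (1, s) := by
  rcases ha.2 with h1 | ⟨h1, h2⟩
  · have hcont : Continuous fun s : ℝ => euclInner (castVec a) (1, s) := by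
      unfold euclInner; fun_prop
    exact (continuousAt_const.eventually_lt hcont.continuousAt
      (by simpa [euclInner, castVec] using h1)).filter_mono nhdsWithin_le_nhds
  · filter_upwards [self_mem_nhdsWithin] with s (hs : 0 < s)
    have h2' : (0 : ℝ) < a.2 := by exact_mod_cast h2
    simpa [euclInner, castVec, h1] using mul_pos h2' hs

-- Bezout for `a` makes `b` an integer multiple of `a`; primitivity of `b` makes it a unit
-- multiple, and the sign normalization rules out `b = -a`.
theorem eq_of_mul_eq_mul (ha : IsPrimitivePos a) (hb : IsPrimitivePos b)
    (h : a.1 * b.2 = a.2 * b.1) : a = b := by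
  obtain ⟨x, y, hxy⟩ := ha.1
  have h1 : b.1 = (x * b.1 + y * b.2) * a.1 := by linear_combination (-b.1) * hxy - y * h
  have h2 : b.2 = (x * b.1 + y * b.2) * a.2 := by linear_combination (-b.2) * hxy + x * h
  rcases Int.isUnit_iff.mp (hb.1.isUnit_of_dvd' ⟨a.1, h1⟩ ⟨a.2, h2⟩) with hc | hc <;>
    rw [hc] at h1 h2
  · exact Prod.ext (by omega) (by omega)
  · rcases ha.2 with _ | _ <;> rcases hb.2 with _ | _ <;> omega

theorem eq_of_smul_eq_smul (ha : IsPrimitivePos a) (hb : IsPrimitivePos b) {s t : ℝ}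
    (hs : s ≠ 0) (ht : t ≠ 0) (h : s • castVec a = t • castVec b) : a = b := by
  have h1 : s * a.1 = t * b.1 := congrArg Prod.fst h
  have h2 : s * a.2 = t * b.2 := congrArg Prod.snd h
  refine eq_of_mul_eq_mul ha hb ?_
  have : s * t * ((a.1 * b.2 - a.2 * b.1 : ℤ) : ℝ) = 0 := by
    push_cast
    linear_combination (t * b.2) * h1 - (t * b.1) * h2
  exact sub_eq_zero.mp (by exact_mod_cast (mul_eq_zero.mp this).resolve_left (mul_ne_zero hs ht))

end IsPrimitivePos

theorem exists_inner_pos_and_separating {ι κ : Type*} [Finite ι] [Finite κ] {a : ι → ℤ × ℤ}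
    (ha : ∀ i, IsPrimitivePos (a i)) {b b' : κ → ℤ × ℤ} (hb : ∀ k, IsPrimitivePos (b k))
    (hb' : ∀ k, IsPrimitivePos (b' k)) {c c' : κ → ℝ} (hc : ∀ k, c k ≠ 0) (hc' : ∀ k, c' k ≠ 0)
    {R : κ → Prop} (hR : ∀ k, R k → b k = b' k → c k ≠ c' k) :
    ∃ s : ℝ, (∀ i, 0 < euclInner (castVec (a i)) (1, s)) ∧
      ∀ k, R k →
        c k * euclInner (castVec (b k)) (1, s) ≠ c' k * euclInner (castVec (b' k)) (1, s) := by
  refine ((eventually_all.2 fun i => (ha i).eventually_inner_castVec_pos).and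
    (eventually_all.2 fun k => ?_)).exists
  by_cases hk : R k
  swap
  · exact Eventually.of_forall fun _ h => absurd h hk
  have hn : c k • castVec (b k) - c' k • castVec (b' k) ≠ 0 := by
    rw [Ne, sub_eq_zero]
    intro h
    have hbb := (hb k).eq_of_smul_eq_smul (hb' k) (hc k) (hc' k) h
    rw [hbb] at h
    exact hR k hk hbb (smul_left_injective ℝ (hb' k).castVec_ne_zero h)
  filter_upwards [eventually_inner_ne_zero hn] with s hs _
  rwa [euclInner_smul_sub_smul, sub_ne_zero] at hs

theorem exists_generic_directions {ι : Type*} [Finite ι] {p : ι → ℤ × ℤ}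
    {m : ι → (ℤ × ℤ) × (ℤ × ℤ)} (hp : ∀ i, IsPrimitivePos (p i) ∧ 1 ≤ (p i).1 ∧ 1 ≤ (p i).2)
    (hm : ∀ i, IsPrimitivePos (m i).1 ∧ IsPrimitivePos (m i).2)
    (hdist : Function.Injective fun i => (p i, m i)) :
    ∃ u v : ℝ × ℝ, (∀ i, 0 < euclInner (castVec (m i).1) u) ∧
      (∀ i, 0 < euclInner (castVec (m i).2) v) ∧
      Function.Injective fun i =>
        (p i).1 * euclInner (castVec (m i).1) u / ((p i).2 * euclInner (castVec (m i).2) v) := by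
  have hp₁ : ∀ i, (0 : ℝ) < (p i).1 := fun i => by exact_mod_cast (hp i).2.1
  have hp₂ : ∀ i, (0 : ℝ) < (p i).2 := fun i => by exact_mod_cast (hp i).2.2
  obtain ⟨s, hu_pos, hu_ne⟩ := exists_inner_pos_and_separating (fun i => (hm i).1)
    (b := fun ij : ι × ι => (m ij.1).1) (b' := fun ij => (m ij.2).1) (fun _ => (hm _).1)
    (fun _ => (hm _).1) (c := fun ij => (p ij.1).1 * (p ij.2).2)
    (c' := fun ij => (p ij.2).1 * (p ij.1).2) (fun _ => (mul_pos (hp₁ _) (hp₂ _)).ne')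
    (fun _ => (mul_pos (hp₁ _) (hp₂ _)).ne') (R := fun ij => ij.1 ≠ ij.2 ∧ (m ij.1).2 = (m ij.2).2)
    fun ⟨i, j⟩ ⟨hij, hm₂⟩ hm₁ hpp => hij <| hdist <| Prod.ext
      ((hp i).1.eq_of_mul_eq_mul (hp j).1 (by rw [mul_comm (p i).2]; exact_mod_cast hpp))
      (Prod.ext hm₁ hm₂)
  set u : ℝ × ℝ := (1, s)
  set α : ι → ℝ := fun i => (p i).1 * euclInner (castVec (m i).1) u with hα
  have hα_pos : ∀ i, 0 < α i := fun i => mul_pos (hp₁ i) (hu_pos i)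
  obtain ⟨t, hv_pos, hv_ne⟩ := exists_inner_pos_and_separating (fun i => (hm i).2)
    (b := fun ij : ι × ι => (m ij.2).2) (b' := fun ij => (m ij.1).2) (fun _ => (hm _).2)
    (fun _ => (hm _).2) (c := fun ij => α ij.1 * (p ij.2).2) (c' := fun ij => α ij.2 * (p ij.1).2)
    (fun _ => (mul_pos (hα_pos _) (hp₂ _)).ne') (fun _ => (mul_pos (hα_pos _) (hp₂ _)).ne')
    (R := fun ij => ij.1 ≠ ij.2) fun ⟨i, j⟩ hij hm₂ hαα => hu_ne (i, j) ⟨hij, hm₂.symm⟩ (by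
      simp only [hα] at hαα
      linear_combination hαα)
  refine ⟨u, (1, t), hu_pos, hv_pos, fun i j hij => ?_⟩
  by_contra hne
  refine hv_ne (i, j) hne ?_
  rw [div_eq_div_iff (mul_pos (hp₂ i) (hv_pos i)).ne' (mul_pos (hp₂ j) (hv_pos j)).ne'] at hij
  linear_combination hij

end

theorem stmt15_general (C : Set (ℝ × ℝ)) (hcpt : IsCompact C)
    (hint : (interior C).Nonempty)
    (P : ℝ × ℝ → ℝ)
    (hP : ∀ t : ℝ × ℝ, P t = sSup ((fun x => euclInner t x) '' C))
    (hPa : AnalyticOnNhd ℝ P {t : ℝ × ℝ | t ≠ 0})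
    (K : ℕ) (p : Fin K → ℤ × ℤ) (m : Fin K → (ℤ × ℤ) × (ℤ × ℤ))
    (hp : ∀ i, IsPrimitivePos (p i) ∧ 1 ≤ (p i).1 ∧ 1 ≤ (p i).2)
    (hm : ∀ i, IsPrimitivePos (m i).1 ∧ IsPrimitivePos (m i).2)
    (hdist : Function.Injective (fun i => (p i, m i)))
    (l : Fin K → ℝ)
    (hl : ∀ z₁ z₂ : ℝ × ℝ, ∑ i, l i * Qfun P (p i) (m i) z₁ z₂ = 0) :
    ∀ i, l i = 0 := by
  obtain ⟨u, v, hu, hv, hinj⟩ := exists_generic_directions hp hm hdist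
  set α : Fin K → ℝ := fun i => (p i).1 * euclInner (castVec (m i).1) u
  set β : Fin K → ℝ := fun i => (p i).2 * euclInner (castVec (m i).2) v
  have hα : ∀ i, 0 < α i := fun i => mul_pos (by exact_mod_cast (hp i).2.1) (hu i)
  have hβ : ∀ i, 0 < β i := fun i => mul_pos (by exact_mod_cast (hp i).2.2) (hv i)
  have hg : ∀ x : ℝ, AnalyticAt ℝ (fun x => P (x, 1)) x := fun x =>
    (hPa (x, 1) (by simp)).comp (f := fun y => (y, 1)) (by fun_prop)
  have hrel : ∀ x, ∑ i, (l i * β i) * P (α i / β i * x, 1) = 0 := fun x => by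
    rw [← hl (x • u) v]
    refine Finset.sum_congr rfl fun i _ => ?_
    have hscale : β i • (α i / β i * x, (1 : ℝ)) = (x * α i, β i) := by
      rw [Prod.smul_mk, smul_eq_mul, smul_eq_mul, ← mul_assoc, mul_div_cancel₀ _ (hβ i).ne',
        mul_one, mul_comm]
    rw [mul_assoc, ← support_smul hP (hβ i).le, hscale, Qfun_smul_left]
  have hslopes : P (1, 0) ≠ -P (-1, 0) := by
    have := support_add_support_neg_pos hcpt hint hP (t := (1, 0)) (by simp)
    rw [Prod.neg_mk, neg_zero] at this
    linarith
  have hinf := infinite_setOf_iteratedDeriv_ne_zero hg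
    (tendsto_support_div_atTop hP (hPa _ (by simp)).continuousAt)
    (tendsto_support_div_atBot hP (hPa _ (by simp)).continuousAt) hslopes
  have hc := eq_zero_of_forall_sum_mul_comp_mul_eq_zero
    (AnalyticOnNhd.contDiff fun x _ => hg x) hinf (fun i => div_pos (hα i) (hβ i)) hinj hrel
  exact fun i => (mul_eq_zero.mp (congrFun hc i)).resolve_right (hβ i).ne'

/-- Let `C ⊂ ℝ²` be a compact, symmetric, strictly convex body with nonempty interior
whose support function `P(t) = sup_{x ∈ C} ⟨t,x⟩` is real-analytic away from `0`.
If `(p⁽¹⁾,m⁽¹⁾), …, (p⁽ᴷ⁾,m⁽ᴷ⁾)` are pairwise distinct pairs with `p⁽ⁱ⁾ ∈ 𝒵`,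
`p⁽ⁱ⁾₁, p⁽ⁱ⁾₂ ≥ 1`, `m⁽ⁱ⁾ ∈ 𝒵 × 𝒵`, and `l₁,…,l_K` are reals with
`Σ l_i Q_{p⁽ⁱ⁾,m⁽ⁱ⁾} ≡ 0` on `ℝ² × ℝ²`, then all `l_i = 0`. -/
theorem stmt15 (C : Set (ℝ × ℝ)) (hcpt : IsCompact C) (hsymm : C = -C)
    (hconv : StrictConvex ℝ C) (hint : (interior C).Nonempty)
    (P : ℝ × ℝ → ℝ)
    (hP : ∀ t : ℝ × ℝ, P t = sSup ((fun x => euclInner t x) '' C))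
    (hPa : AnalyticOnNhd ℝ P {t : ℝ × ℝ | t ≠ 0})
    (K : ℕ) (p : Fin K → ℤ × ℤ) (m : Fin K → (ℤ × ℤ) × (ℤ × ℤ))
    (hp : ∀ i, IsPrimitivePos (p i) ∧ 1 ≤ (p i).1 ∧ 1 ≤ (p i).2)
    (hm : ∀ i, IsPrimitivePos (m i).1 ∧ IsPrimitivePos (m i).2)
    (hdist : Function.Injective (fun i => (p i, m i)))
    (l : Fin K → ℝ)
    (hl : ∀ z₁ z₂ : ℝ × ℝ, ∑ i, l i * Qfun P (p i) (m i) z₁ z₂ = 0) :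
    ∀ i, l i = 0 :=
  stmt15_general C hcpt hint P hP hPa K p m hp hm hdist l hl
end
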